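/- arXiv:1303.1395 — 13 statements merged into one kernel-verified Lean document; each statement's English description precedes it below -/
import Mathlib

section
/- The permutation 2431 cannot be sorted by a machine consisting of a pop stack followed directly by a stack (the PS machine), i.e., there is no sequence of inputs (pushing the next input entry onto the pop stack), transfers (popping the entire contents of the pop stack onto the stack), and outputs (popping the top of the stack) that outputs 1,2,3,4 from input 2,4,3,1. -/
/-- One step of the PS machine.  State: (input, pop stack, stack, output);
stacks have their top at the head, output is appended at the end. -/
inductive PSStep : (List ℕ × List ℕ × List ℕ × List ℕ) → (List ℕ × List ℕ × List ℕ × List ℕ) → Prop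
  | input (x : ℕ) (inp ps st out : List ℕ) :
      PSStep (x :: inp, ps, st, out) (inp, x :: ps, st, out)
  | transfer (inp ps st out : List ℕ) (h : ps ≠ []) :
      PSStep (inp, ps, st, out) (inp, [], ps.reverse ++ st, out)
  | output (inp ps st out : List ℕ) (x : ℕ) :
      PSStep (inp, ps, x :: st, out) (inp, ps, st, out ++ [x])

/-- `p` can be sorted by a pop stack followed directly by a stack. -/
def PSSortable (p : List ℕ) : Prop :=
  Relation.ReflTransGen PSStep (p, [], [], []) ([], [], [], List.range' 1 p.length)

/-!
Call a pair `b < a` locked when `a` must leave the machine before `b` whatever happens next.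
Steps of the machine never unlock a pair, and a sorted output has no locked pair. Starting
from `2431`, only seven states are reachable without locking a pair (the entries `2, 4, 3`
cannot be stacked as `2, 3, 4` above `1`), and none of them is final.
-/

open List Relation

namespace PSStep

/-- `a` is output before `b` in every continuation; the pop-stack clause is reversed because a
transfer puts the earliest entry on top. -/
def ForcedBefore (a b : ℕ) : List ℕ × List ℕ × List ℕ × List ℕ → Prop
  | (inp, ps, st, out) =>
      [a, b] <+ out ∨ (a ∈ out ∧ b ∈ st ++ ps ++ inp) ∨ [a, b] <+ st ∨ [b, a] <+ ps

instance (a b : ℕ) (s : List ℕ × List ℕ × List ℕ × List ℕ) :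
    Decidable (ForcedBefore a b s) :=
  inferInstanceAs (Decidable (_ ∨ _))

theorem ForcedBefore.step {a b : ℕ} {s t} (hs : ForcedBefore a b s) (h : PSStep s t) :
    ForcedBefore a b t := by
  cases h with
  | input x inp ps st out =>
    obtain hab | ⟨ha, hb⟩ | hab | hab := hs
    · exact .inl hab
    · refine .inr (.inl ⟨ha, ?_⟩)
      simp only [mem_append, mem_cons] at hb ⊢
      tauto
    · exact .inr (.inr (.inl hab))
    · exact .inr (.inr (.inr (hab.cons x)))
  | transfer inp ps st out _ =>
    obtain hab | ⟨ha, hb⟩ | hab | hab := hs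
    · exact .inl hab
    · refine .inr (.inl ⟨ha, ?_⟩)
      simp only [mem_append, mem_reverse, not_mem_nil] at hb ⊢
      tauto
    · exact .inr (.inr (.inl (hab.trans (sublist_append_right _ _))))
    · exact .inr (.inr (.inl ((reverse_sublist.mpr hab).trans (sublist_append_left _ _))))
  | output inp ps st out x =>
    obtain hab | ⟨ha, hb⟩ | hab | hab := hs
    · exact .inl (hab.trans (sublist_append_left _ _))
    · by_cases hbx : b = x
      · subst hbx
        exact .inl ((singleton_sublist.mpr ha).append (Sublist.refl [b]))
      · refine .inr (.inl ⟨mem_append_left _ ha, ?_⟩)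
        simp only [mem_append, mem_cons] at hb ⊢
        tauto
    · rcases sublist_cons_iff.mp hab with hab | ⟨r, hr, hb⟩
      · exact .inr (.inr (.inl hab))
      · obtain ⟨rfl, rfl⟩ := cons_eq_cons.mp hr
        refine .inr (.inl ⟨mem_append_right _ (mem_singleton_self a), ?_⟩)
        exact mem_append_left _ (mem_append_left _ (singleton_sublist.mp hb))
    · exact .inr (.inr (.inr hab))

def Locked (s : List ℕ × List ℕ × List ℕ × List ℕ) : Prop :=
  ∃ a b, b < a ∧ ForcedBefore a b s

theorem Locked.step {s t} (hs : Locked s) (h : PSStep s t) : Locked t :=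
  let ⟨a, b, hba, hab⟩ := hs
  ⟨a, b, hba, hab.step h⟩

theorem not_locked_of_pairwise {out : List ℕ} (h : out.Pairwise (· < ·)) :
    ¬ Locked ([], [], [], out) := by
  rintro ⟨a, b, hba, hab | ⟨-, hb⟩ | hab | hab⟩
  · have := h.sublist hab
    simp only [pairwise_cons, mem_singleton, forall_eq] at this
    omega
  · simp at hb
  · simp at hab
  · simp at hab

def unlockedStates2431 : List (List ℕ × List ℕ × List ℕ × List ℕ) :=
  [([2, 4, 3, 1], [], [], []), ([4, 3, 1], [2], [], []), ([4, 3, 1], [], [2], []),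
    ([3, 1], [4, 2], [], []), ([3, 1], [4], [2], []), ([3, 1], [], [2, 4], []),
    ([1], [3], [2, 4], [])]

theorem mem_unlockedStates2431_or_locked {s} (h : ReflTransGen PSStep ([2, 4, 3, 1], [], [], []) s) :
    s ∈ unlockedStates2431 ∨ Locked s := by
  induction h with
  | refl => exact .inl (by decide)
  | tail _ hst ih =>
    rcases ih with hs | hs
    · simp only [unlockedStates2431, mem_cons, not_mem_nil, or_false] at hs
      rcases hs with rfl | rfl | rfl | rfl | rfl | rfl | rfl <;> cases hst <;>
        first
        | exact .inl (by decide)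
        | (refine .inr ⟨2, 1, ?_⟩; decide)
        | (refine .inr ⟨3, 1, ?_⟩; decide)
        | (refine .inr ⟨3, 2, ?_⟩; decide)
        | (refine .inr ⟨4, 2, ?_⟩; decide)
        | (refine .inr ⟨4, 3, ?_⟩; decide)
    · exact .inr (hs.step hst)

end PSStep

theorem stmt0 : ¬ PSSortable [2, 4, 3, 1] := by
  intro h
  rcases PSStep.mem_unlockedStates2431_or_locked h with hu | hl
  · simp [PSStep.unlockedStates2431] at hu
  · exact PSStep.not_locked_of_pairwise (pairwise_lt_range' ..) hl
end

section
/- The permutation 3142 cannot be sorted by the PS machine (a pop stack followed directly by a stack). -/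
/-!
A configuration can only lead to the sorted output if its output is a prefix of the target and
both the pop stack (read bottom to top, the order in which a transfer stacks it) and the stack
(read top to bottom) list their entries in the order in which they must still be output: this
property propagates backwards along every step. From 3142 only nine configurations can be
reached through viable ones, and none of them is final: once 1 has been output, 4 has to enter
the pop stack before 2 and then lands above 3 or above 2.
-/

abbrev PSState := List ℕ × List ℕ × List ℕ × List ℕ

def PSState.final (F : List ℕ) : PSState := ([], [], [], F)

def PSViable (F : List ℕ) : PSState → Prop
  | (_, ps, st, out) =>
    out.IsPrefix F ∧ ps.reverse.Sublist (F.drop out.length) ∧ st.Sublist (F.drop out.length)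

instance (F : List ℕ) (s : PSState) : Decidable (PSViable F s) := by
  unfold PSViable; infer_instance

lemma List.drop_length_of_append_singleton_prefix {α : Type*} {l F : List α} {x : α}
    (h : (l ++ [x]).IsPrefix F) : F.drop l.length = x :: F.drop (l.length + 1) := by
  obtain ⟨w, rfl⟩ := h
  simp

lemma PSViable.of_step {F : List ℕ} {s t : PSState} (hstep : PSStep s t)
    (ht : PSViable F t) : PSViable F s := by
  cases hstep with
  | input x inp ps st out =>
    obtain ⟨hout, hps, hst⟩ := ht
    rw [List.reverse_cons] at hps
    exact ⟨hout, (List.sublist_append_left _ _).trans hps, hst⟩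
  | transfer inp ps st out _ =>
    obtain ⟨hout, -, hst⟩ := ht
    exact ⟨hout, (List.sublist_append_left _ _).trans hst,
      (List.sublist_append_right _ _).trans hst⟩
  | output inp ps st out x =>
    obtain ⟨hout, hps, hst⟩ := ht
    rw [List.length_append, List.length_singleton] at hps hst
    refine ⟨(List.prefix_append _ _).trans hout, ?_⟩
    rw [List.drop_length_of_append_singleton_prefix hout]
    exact ⟨hps.cons x, hst.cons_cons x⟩

lemma PSViable.of_reaches {F : List ℕ} {s : PSState}
    (h : Relation.ReflTransGen PSStep s (PSState.final F)) : PSViable F s := by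
  induction h using Relation.ReflTransGen.head_induction_on with
  | refl => simp [PSState.final, PSViable]
  | head hstep _ ih => exact PSViable.of_step hstep ih

lemma PSState.final_mem_of_reaches {F : List ℕ} {R : List PSState}
    (hR : ∀ s ∈ R, ∀ t, PSStep s t → PSViable F t → t ∈ R) {s : PSState} (hs : s ∈ R)
    (h : Relation.ReflTransGen PSStep s (PSState.final F)) : PSState.final F ∈ R := by
  induction h using Relation.ReflTransGen.head_induction_on with
  | refl => exact hs
  | head hstep hrest ih => exact ih (hR _ hs _ hstep (PSViable.of_reaches hrest))

def viableFrom3142 : List PSState :=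
  [([3, 1, 4, 2], [], [], []), ([1, 4, 2], [3], [], []), ([1, 4, 2], [], [3], []),
    ([4, 2], [1], [3], []), ([2], [4, 1], [3], []), ([4, 2], [], [1, 3], []),
    ([2], [4], [1, 3], []), ([4, 2], [], [3], [1]), ([2], [4], [3], [1])]

lemma viableFrom3142_closed :
    ∀ s ∈ viableFrom3142, ∀ t, PSStep s t → PSViable [1, 2, 3, 4] t → t ∈ viableFrom3142 := by
  intro s hs t hstep
  simp only [viableFrom3142, List.mem_cons, List.not_mem_nil, or_false] at hs
  rcases hs with rfl | rfl | rfl | rfl | rfl | rfl | rfl | rfl | rfl <;>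
    cases hstep <;> decide

theorem stmt1 : ¬ PSSortable [3, 1, 4, 2] := fun h =>
  absurd (PSState.final_mem_of_reaches viableFrom3142_closed (by decide) h) (by decide)
end

section
/- The permutation 3241 cannot be sorted by the PS machine (a pop stack followed directly by a stack). -/
open Relation

def PSReaches (F : List ℕ) (s : List ℕ × List ℕ × List ℕ × List ℕ) : Prop :=
  ReflTransGen PSStep s ([], [], [], F)

theorem PSReaches.exists_remaining {F : List ℕ} {s : List ℕ × List ℕ × List ℕ × List ℕ}
    (h : PSReaches F s) :
    ∃ r, F = s.2.2.2 ++ r ∧ s.2.2.1.Sublist r ∧ s.2.1.reverse.Sublist r := by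
  induction h using ReflTransGen.head_induction_on with
  | refl => exact ⟨[], by simp⟩
  | head step _ ih =>
    cases step with
    | input x =>
      obtain ⟨r, hF, hst, hps⟩ := ih
      exact ⟨r, hF, hst, (List.sublist_append_left _ [x]).trans (by simpa using hps)⟩
    | transfer =>
      obtain ⟨r, hF, hst, -⟩ := ih
      exact ⟨r, hF, (List.sublist_append_right _ _).trans hst,
        (List.sublist_append_left _ _).trans hst⟩
    | output _ _ _ _ x =>
      obtain ⟨r, hF, hst, hps⟩ := ih
      exact ⟨x :: r, by simp [hF], hst.cons_cons x, hps.cons x⟩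

theorem PSReaches.sorted {F inp ps st out : List ℕ} (hF : F.Pairwise (· < ·))
    (h : PSReaches F (inp, ps, st, out)) :
    out <+: F ∧ st.Pairwise (· < ·) ∧ ps.reverse.Pairwise (· < ·) := by
  obtain ⟨r, rfl, hst, hps⟩ := h.exists_remaining
  have hr : r.Pairwise (· < ·) := (List.pairwise_append.mp hF).2.1
  exact ⟨List.prefix_append _ _, hr.sublist hst, hr.sublist hps⟩

theorem not_psReaches_of_not_sorted {F inp ps st out : List ℕ} (hF : F.Pairwise (· < ·))
    (h : ¬ (out <+: F ∧ st.Pairwise (· < ·) ∧ ps.reverse.Pairwise (· < ·))) :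
    ¬ PSReaches F (inp, ps, st, out) :=
  mt (PSReaches.sorted hF) h

theorem not_psReaches_of_forall_step {F : List ℕ} {s : List ℕ × List ℕ × List ℕ × List ℕ}
    (hs : s ≠ ([], [], [], F)) (h : ∀ t, PSStep s t → ¬ PSReaches F t) : ¬ PSReaches F s := by
  intro hr
  obtain rfl | ⟨t, hst, ht⟩ := hr.cases_head
  · exact hs rfl
  · exact h t hst ht

theorem stmt2 : ¬ PSSortable [3, 2, 4, 1] := by
  have unsorted {inp ps st out : List ℕ}
      (h : ¬ (out <+: [1, 2, 3, 4] ∧ st.Pairwise (· < ·) ∧ ps.reverse.Pairwise (· < ·))) :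
      ¬ PSReaches [1, 2, 3, 4] (inp, ps, st, out) :=
    not_psReaches_of_not_sorted (by decide) h
  -- `dead_<input>_<pop stack>_<stack>`; nothing has been output in any of these states.
  have dead_1_4_23 : ¬ PSReaches [1, 2, 3, 4] ([1], [4], [2, 3], []) :=
    not_psReaches_of_forall_step (by decide) fun t ht => by
      cases ht <;> first | contradiction | assumption | exact unsorted (by decide)
  have dead_1_42_3 : ¬ PSReaches [1, 2, 3, 4] ([1], [4, 2], [3], []) :=
    not_psReaches_of_forall_step (by decide) fun t ht => by
      cases ht <;> first | contradiction | assumption | exact unsorted (by decide)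
  have dead_41__23 : ¬ PSReaches [1, 2, 3, 4] ([4, 1], [], [2, 3], []) :=
    not_psReaches_of_forall_step (by decide) fun t ht => by
      cases ht <;> first | contradiction | assumption | exact unsorted (by decide)
  have dead_41_2_3 : ¬ PSReaches [1, 2, 3, 4] ([4, 1], [2], [3], []) :=
    not_psReaches_of_forall_step (by decide) fun t ht => by
      cases ht <;> first | contradiction | assumption | exact unsorted (by decide)
  have dead_241__3 : ¬ PSReaches [1, 2, 3, 4] ([2, 4, 1], [], [3], []) :=
    not_psReaches_of_forall_step (by decide) fun t ht => by
      cases ht <;> first | contradiction | assumption | exact unsorted (by decide)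
  have dead_241_3_ : ¬ PSReaches [1, 2, 3, 4] ([2, 4, 1], [3], [], []) :=
    not_psReaches_of_forall_step (by decide) fun t ht => by
      cases ht <;> first | contradiction | assumption | exact unsorted (by decide)
  exact not_psReaches_of_forall_step (by decide) fun t ht => by
    cases ht <;> first | contradiction | assumption
end

section
/- A permutation π can be sorted by two stacks in series if and only if its two-stack dual π^d, defined by π^d(i) = n+1−π^{−1}(n+1−i) for a permutation π of length n, can be sorted by two stacks in series. -/
/-- One step of the two-stacks-in-series machine.  State: (input, first stack, second stack, output);
stacks have their top at the head, output is appended at the end. -/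
inductive TSStep : (List ℕ × List ℕ × List ℕ × List ℕ) → (List ℕ × List ℕ × List ℕ × List ℕ) → Prop
  | input (x : ℕ) (inp s1 s2 out : List ℕ) :
      TSStep (x :: inp, s1, s2, out) (inp, x :: s1, s2, out)
  | transfer (inp : List ℕ) (x : ℕ) (s1 s2 out : List ℕ) :
      TSStep (inp, x :: s1, s2, out) (inp, s1, x :: s2, out)
  | output (inp s1 : List ℕ) (x : ℕ) (s2 out : List ℕ) :
      TSStep (inp, s1, x :: s2, out) (inp, s1, s2, out ++ [x])

/-- `p` can be sorted by two stacks in series. -/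
def TSSortable (p : List ℕ) : Prop :=
  Relation.ReflTransGen TSStep (p, [], [], []) ([], [], [], List.range' 1 p.length)

/-- The one-line notation of a permutation of `Fin n`, with values `1, …, n`. -/
def permToList {n : ℕ} (π : Equiv.Perm (Fin n)) : List ℕ :=
  (List.finRange n).map fun i => (π i : ℕ) + 1

/-- The reversal permutation `i ↦ n + 1 - i` (on `Fin n`, `i ↦ n - 1 - i`). -/
def revP (n : ℕ) : Equiv.Perm (Fin n) :=
  ⟨Fin.rev, Fin.rev, fun i => Fin.rev_rev i, fun i => Fin.rev_rev i⟩

/-- The two-stack dual `π^d(i) = n + 1 - π⁻¹(n + 1 - i)`. -/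
def twoStackDual {n : ℕ} (π : Equiv.Perm (Fin n)) : Equiv.Perm (Fin n) :=
  ((revP n).trans π.symm).trans (revP n)

/-!
Running the machine backwards is again the machine: the output, reversed, is read as input, and
the two stacks exchange roles. So if `π` is sorted, the identity reversed can be transformed into
`π` reversed. Relabelling each value `π i + 1` as `n - i` commutes with every move, and it turns
that input into `π^d` and that output into `1, …, n`.
-/

abbrev TSState := List ℕ × List ℕ × List ℕ × List ℕ

namespace TSState

def map (f : ℕ → ℕ) (s : TSState) : TSState :=
  (s.1.map f, s.2.1.map f, s.2.2.1.map f, s.2.2.2.map f)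

def reverse (s : TSState) : TSState :=
  (s.2.2.2.reverse, s.2.2.1, s.2.1, s.1.reverse)

end TSState

namespace TSStep

theorem map (f : ℕ → ℕ) {a b : TSState} (h : TSStep a b) : TSStep (a.map f) (b.map f) := by
  cases h with
  | input x inp s1 s2 out =>
      simpa [TSState.map] using input (f x) (inp.map f) (s1.map f) (s2.map f) (out.map f)
  | transfer inp x s1 s2 out =>
      simpa [TSState.map] using transfer (inp.map f) (f x) (s1.map f) (s2.map f) (out.map f)
  | output inp s1 x s2 out =>
      simpa [TSState.map] using output (inp.map f) (s1.map f) (f x) (s2.map f) (out.map f)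

theorem reverse {a b : TSState} (h : TSStep a b) : TSStep b.reverse a.reverse := by
  cases h with
  | input x inp s1 s2 out =>
      simpa [TSState.reverse] using output out.reverse s2 x s1 inp.reverse
  | transfer inp x s1 s2 out =>
      simpa [TSState.reverse] using transfer out.reverse x s2 s1 inp.reverse
  | output inp s1 x s2 out =>
      simpa [TSState.reverse] using input x out.reverse s2 s1 inp.reverse

theorem reflTransGen_reverse_map (f : ℕ → ℕ) {p q : List ℕ}
    (h : Relation.ReflTransGen TSStep (p, [], [], []) ([], [], [], q)) :
    Relation.ReflTransGen TSStep (q.reverse.map f, [], [], []) ([], [], [], p.reverse.map f) := by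
  have hrev : Relation.ReflTransGen TSStep (TSState.reverse ([], [], [], q))
      (TSState.reverse (p, [], [], [])) :=
    Relation.ReflTransGen.lift (r := Function.swap TSStep) TSState.reverse (fun _ _ => reverse) _ _
      (Relation.ReflTransGen.swap _ _ h)
  exact Relation.ReflTransGen.lift (TSState.map f) (fun _ _ => TSStep.map f) _ _ hrev

end TSStep

def relabel {n : ℕ} (ρ : Fin n → Fin n) (v : ℕ) : ℕ :=
  if hv : v - 1 < n then ρ ⟨v - 1, hv⟩ + 1 else 0

theorem relabel_val_add_one {n : ℕ} (ρ : Fin n → Fin n) (i : Fin n) :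
    relabel ρ (i + 1) = ρ i + 1 := by
  simp [relabel]

theorem length_permToList {n : ℕ} (σ : Equiv.Perm (Fin n)) : (permToList σ).length = n := by
  simp [permToList]

theorem permToList_one (n : ℕ) : permToList (1 : Equiv.Perm (Fin n)) = List.range' 1 n := by
  apply List.ext_getElem <;> simp [permToList, add_comm]

theorem permToList_reverse {n : ℕ} (σ : Equiv.Perm (Fin n)) :
    (permToList σ).reverse = permToList ((revP n).trans σ) := by
  rw [permToList, ← List.map_reverse, List.finRange_reverse, List.map_map]
  rfl

theorem map_relabel_permToList {n : ℕ} (σ ρ : Equiv.Perm (Fin n)) :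
    (permToList σ).map (relabel ρ) = permToList (σ.trans ρ) := by
  simp only [permToList, List.map_map]
  congr 1
  funext i
  exact relabel_val_add_one ρ (σ i)

theorem TSSortable.permToList_twoStackDual {n : ℕ} {π : Equiv.Perm (Fin n)}
    (h : TSSortable (permToList π)) : TSSortable (permToList (twoStackDual π)) := by
  unfold TSSortable at h ⊢
  rw [length_permToList, ← permToList_one] at h ⊢
  have hback := TSStep.reflTransGen_reverse_map (relabel (π.symm.trans (revP n))) h
  have hstart : ((revP n).trans (1 : Equiv.Perm (Fin n))).trans (π.symm.trans (revP n)) =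
      twoStackDual π := rfl
  have hend : ((revP n).trans π).trans (π.symm.trans (revP n)) = 1 := by
    ext i
    simp [revP]
  rwa [permToList_reverse, permToList_reverse, map_relabel_permToList, map_relabel_permToList,
    hstart, hend] at hback

theorem twoStackDual_twoStackDual {n : ℕ} (π : Equiv.Perm (Fin n)) :
    twoStackDual (twoStackDual π) = π := by
  ext i
  simp [twoStackDual, revP, Fin.rev_rev]

theorem stmt3 (n : ℕ) (π : Equiv.Perm (Fin n)) :
    TSSortable (permToList π) ↔ TSSortable (permToList (twoStackDual π)) :=
  ⟨TSSortable.permToList_twoStackDual,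
    fun h => twoStackDual_twoStackDual π ▸ h.permToList_twoStackDual⟩
end

section
/- Adding a queue between a stack and any subsequent sorting machine M does not change the set of sortable permutations: a permutation is sortable by the machine SM (stack then M) if and only if it is sortable by SQM (stack, then queue, then M). In particular, the machines SP (stack then pop stack) and SQP (stack, queue, pop stack) sort exactly the same permutations. -/
/-- An abstract sorting machine: a state space with an initial state, a relation for
reading (consuming) an input entry, a relation for emitting an output entry, and
silent internal moves. -/
structure Machine where
  S : Type
  init : S
  read : S → ℕ → S → Prop
  emit : S → ℕ → S → Prop
  tau : S → S → Prop

/-- `Run M s inp out t`: starting from state `s`, the machine `M` can consume the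
input sequence `inp` (in order), emit the output sequence `out` (in order, arbitrarily
interleaved with the reads), and end in state `t`. -/
inductive Run (M : Machine) : M.S → List ℕ → List ℕ → M.S → Prop
  | refl (s : M.S) : Run M s [] [] s
  | read {s t u : M.S} {x : ℕ} {inp out : List ℕ} :
      M.read s x t → Run M t inp out u → Run M s (x :: inp) out u
  | emit {s t u : M.S} {x : ℕ} {inp out : List ℕ} :
      M.emit s x t → Run M t inp out u → Run M s inp (x :: out) u
  | tau {s t u : M.S} {inp out : List ℕ} :
      M.tau s t → Run M t inp out u → Run M s inp out u

/-- `M` can sort `p`: consuming `p`, it can output `1, …, p.length`. -/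
def MSortable (M : Machine) (p : List ℕ) : Prop :=
  ∃ s, Run M M.init p (List.range' 1 p.length) s

/-- A stack (top at the head) feeding directly into the machine `M`. -/
def stackThen (M : Machine) : Machine where
  S := List ℕ × M.S
  init := ([], M.init)
  read := fun s x t => t.1 = x :: s.1 ∧ t.2 = s.2
  emit := fun s x t => M.emit s.2 x t.2 ∧ t.1 = s.1
  tau := fun s t =>
    (∃ x r, s.1 = x :: r ∧ t.1 = r ∧ M.read s.2 x t.2) ∨ (t.1 = s.1 ∧ M.tau s.2 t.2)

/-- A stack, followed by a queue (front at the head), feeding into the machine `M`. -/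
def stackQueueThen (M : Machine) : Machine where
  S := List ℕ × List ℕ × M.S
  init := ([], [], M.init)
  read := fun s x t => t.1 = x :: s.1 ∧ t.2 = s.2
  emit := fun s x t => M.emit s.2.2 x t.2.2 ∧ t.1 = s.1 ∧ t.2.1 = s.2.1
  tau := fun s t =>
    (∃ x r, s.1 = x :: r ∧ t.1 = r ∧ t.2.1 = s.2.1 ++ [x] ∧ t.2.2 = s.2.2) ∨
    (∃ x r, s.2.1 = x :: r ∧ t.2.1 = r ∧ t.1 = s.1 ∧ M.read s.2.2 x t.2.2) ∨
    (t.1 = s.1 ∧ t.2.1 = s.2.1 ∧ M.tau s.2.2 t.2.2)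

/-- A pop stack as a machine.  State: (contents, pending-output buffer), both top-first.
It can only read while not in the middle of emptying; the internal move pops the whole
stack into the buffer, whose entries are then emitted in order. -/
def popStackM : Machine where
  S := List ℕ × List ℕ
  init := ([], [])
  read := fun s x t => s.2 = [] ∧ t = (x :: s.1, [])
  emit := fun s x t => ∃ r, s.2 = x :: r ∧ t = (s.1, r)
  tau := fun s t => s.1 ≠ [] ∧ t = ([], s.1)


/-!
A run of the stack-then-queue machine splits into a run of the stack alone, producing some
word `w`, and a run of `M` consuming a prefix `v` of `w`; the rest of `w` is what is left
in the queue. A stack can always withhold the tail of its output by pushing instead of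
popping, so the stack alone can produce exactly `v`, and feeding `v` straight into `M` is a
run of the stack-then-`M` machine. Conversely, a stack-then-`M` run is a stack-queue-`M` run
in which every popped entry passes through the queue at once.
-/

def stackM : Machine where
  S := List ℕ
  init := []
  read := fun s x t => t = x :: s
  emit := fun s x t => s = x :: t
  tau := fun _ _ => False

namespace Run

variable {M : Machine}

theorem append {s t u : M.S} {inp₁ out₁ inp₂ out₂ : List ℕ}
    (h₁ : Run M s inp₁ out₁ t) (h₂ : Run M t inp₂ out₂ u) :
    Run M s (inp₁ ++ inp₂) (out₁ ++ out₂) u := by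
  induction h₁ with
  | refl => simpa using h₂
  | read h _ ih => exact .read h (ih h₂)
  | emit h _ ih => exact .emit h (ih h₂)
  | tau h _ ih => exact .tau h (ih h₂)

theorem exists_of_cons_input {m m' : M.S} {x : ℕ} {inp out : List ℕ}
    (h : Run M m (x :: inp) out m') :
    ∃ out₁ out₂ m₁ m₂, out = out₁ ++ out₂ ∧ Run M m [] out₁ m₁ ∧
      M.read m₁ x m₂ ∧ Run M m₂ inp out₂ m' := by
  generalize hxs : x :: inp = xs at h
  induction h with
  | refl => cases hxs
  | read hr hrun =>
    obtain ⟨rfl, rfl⟩ := List.cons.inj hxs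
    exact ⟨[], _, _, _, rfl, .refl _, hr, hrun⟩
  | emit he _ ih =>
    obtain ⟨out₁, out₂, m₁, m₂, rfl, h₁, hr, h₂⟩ := ih hxs
    exact ⟨_ :: out₁, out₂, m₁, m₂, rfl, .emit he h₁, hr, h₂⟩
  | tau ht _ ih =>
    obtain ⟨out₁, out₂, m₁, m₂, rfl, h₁, hr, h₂⟩ := ih hxs
    exact ⟨out₁, out₂, m₁, m₂, rfl, .tau ht h₁, hr, h₂⟩

theorem stackThen_of_nil_input {m m' : M.S} {out : List ℕ}
    (h : Run M m [] out m') (st : List ℕ) :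
    Run (stackThen M) (st, m) [] out (st, m') := by
  generalize hnil : ([] : List ℕ) = inp at h
  induction h with
  | refl => exact .refl _
  | read => cases hnil
  | @emit _ t _ _ _ _ he _ ih => exact .emit (t := (st, t)) ⟨he, rfl⟩ (ih hnil)
  | @tau _ t _ _ _ ht _ ih => exact .tau (t := (st, t)) (Or.inr ⟨rfl, ht⟩) (ih hnil)

theorem stackThen_of_stackM {st st' : stackM.S} {inp w : List ℕ}
    (hs : Run stackM st inp w st') {m m' : M.S} {out : List ℕ} (hm : Run M m w out m') :
    Run (stackThen M) (st, m) inp out (st', m') := by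
  induction hs generalizing m out with
  | refl st => exact hm.stackThen_of_nil_input st
  | @read s t _ x _ _ hr _ ih =>
    exact .read (show (stackThen M).read (s, m) x (t, m) from ⟨hr, rfl⟩) (ih hm)
  | @emit st t _ x _ _ hpop _ ih =>
    obtain ⟨out₁, out₂, m₁, m₂, rfl, h₁, hr, h₂⟩ := hm.exists_of_cons_input
    exact (h₁.stackThen_of_nil_input st).append (.tau (Or.inl ⟨x, t, hpop, rfl, hr⟩) (ih h₂))
  | tau ht => exact ht.elim

theorem stackQueueThen_of_stackThen {s s' : (stackThen M).S} {inp out : List ℕ}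
    (h : Run (stackThen M) s inp out s') :
    Run (stackQueueThen M) (s.1, [], s.2) inp out (s'.1, [], s'.2) := by
  induction h with
  | refl => exact .refl _
  | @read _ t _ _ _ _ hr _ ih => exact .read (t := (t.1, [], t.2)) ⟨hr.1, by rw [hr.2]⟩ ih
  | @emit _ t _ _ _ _ he _ ih => exact .emit (t := (t.1, [], t.2)) ⟨he.1, he.2, rfl⟩ ih
  | @tau s t _ _ _ ht _ ih =>
    rcases ht with ⟨x, r, hpop, hr, hread⟩ | ⟨hst, ht⟩
    · exact .tau (t := (t.1, [x], s.2)) (Or.inl ⟨x, r, hpop, hr, rfl, rfl⟩)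
        (.tau (t := (t.1, [], t.2)) (Or.inr (Or.inl ⟨x, [], rfl, rfl, rfl, hread⟩)) ih)
    · exact .tau (t := (t.1, [], t.2)) (Or.inr (Or.inr ⟨hst, rfl, ht⟩)) ih

/-- `w` enters the queue (popped from the stack) and `v` leaves it (read by `M`); the
equation is the FIFO discipline of the queue. -/
theorem stackQueueThen_decompose {s s' : (stackQueueThen M).S} {inp out : List ℕ}
    (h : Run (stackQueueThen M) s inp out s') :
    ∃ w v, s.2.1 ++ w = v ++ s'.2.1 ∧
      Run stackM s.1 inp w s'.1 ∧ Run M s.2.2 v out s'.2.2 := by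
  induction h with
  | refl => exact ⟨[], [], by simp, .refl _, .refl _⟩
  | read hr _ ih =>
    obtain ⟨w, v, hq, hs, hm⟩ := ih
    obtain ⟨hpush, hrest⟩ := hr
    rw [hrest] at hq hm
    exact ⟨w, v, hq, .read hpush hs, hm⟩
  | emit he _ ih =>
    obtain ⟨w, v, hq, hs, hm⟩ := ih
    obtain ⟨he, hst, hqu⟩ := he
    rw [hst] at hs
    rw [hqu] at hq
    exact ⟨w, v, hq, hs, .emit he hm⟩
  | tau ht _ ih =>
    obtain ⟨w, v, hq, hs, hm⟩ := ih
    rcases ht with ⟨x, r, hpop, hst, hqu, hm'⟩ | ⟨x, r, hqu, hqu', hst, hr⟩ | ⟨hst, hqu, ht⟩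
    · rw [hqu] at hq
      rw [hm'] at hm
      exact ⟨x :: w, v, by simpa using hq, .emit (by rw [hpop, hst]; rfl) hs, hm⟩
    · rw [hqu'] at hq
      rw [hst] at hs
      exact ⟨w, x :: v, by rw [hqu]; simpa using hq, hs, .read hr hm⟩
    · rw [hst] at hs
      rw [hqu] at hq
      exact ⟨w, v, hq, hs, .tau ht hm⟩

end Run

theorem stackM_exists_run_nil_output (st : stackM.S) (inp : List ℕ) :
    ∃ st', Run stackM st inp [] st' := by
  induction inp generalizing st with
  | nil => exact ⟨st, Run.refl (M := stackM) st⟩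
  | cons x inp ih =>
    obtain ⟨st', h⟩ := ih (x :: st)
    exact ⟨st', .read rfl h⟩

theorem stackM_exists_run_of_append_output {st st' : stackM.S} {inp v r : List ℕ}
    (h : Run stackM st inp (v ++ r) st') : ∃ st'', Run stackM st inp v st'' := by
  generalize hout : v ++ r = out at h
  induction h generalizing v with
  | refl st =>
    obtain ⟨rfl, -⟩ := List.append_eq_nil_iff.mp hout
    exact ⟨st, .refl st⟩
  | read hr _ ih =>
    obtain ⟨st'', h⟩ := ih hout
    exact ⟨st'', .read hr h⟩
  | emit he _ ih =>
    cases v with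
    | nil => exact stackM_exists_run_nil_output _ _
    | cons y v =>
      obtain ⟨rfl, hout'⟩ := List.cons.inj hout
      obtain ⟨st'', h⟩ := ih hout'
      exact ⟨st'', .emit he h⟩
  | tau ht => exact ht.elim

theorem msortable_stackThen_iff_stackQueueThen (M : Machine) (p : List ℕ) :
    MSortable (stackThen M) p ↔ MSortable (stackQueueThen M) p := by
  constructor
  · rintro ⟨s, h⟩
    exact ⟨_, h.stackQueueThen_of_stackThen⟩
  · rintro ⟨s, h⟩
    obtain ⟨w, v, hq, hs, hm⟩ := h.stackQueueThen_decompose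
    rw [show w = v ++ s.2.1 from hq] at hs
    obtain ⟨st, hs'⟩ := stackM_exists_run_of_append_output hs
    exact ⟨(st, s.2.2), hs'.stackThen_of_stackM hm⟩

theorem stmt4 :
    (∀ (M : Machine) (p : List ℕ), MSortable (stackThen M) p ↔ MSortable (stackQueueThen M) p) ∧
    (∀ p : List ℕ, MSortable (stackThen popStackM) p ↔ MSortable (stackQueueThen popStackM) p) :=
  ⟨msortable_stackThen_iff_stackQueueThen, msortable_stackThen_iff_stackQueueThen popStackM⟩
end

section
/- A permutation avoids both 132 and 213 if and only if it is reverse layered, i.e., expressible as a skew sum ι₁ ⊖ ι₂ ⊖ ⋯ ⊖ ι_m of increasing permutations ι₁,...,ι_m. -/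
/-- `u` and `v` have the same length and are order isomorphic (same relative order of entries). -/
def OrderIsoList (u v : List ℕ) : Prop :=
  u.length = v.length ∧ ∀ i j, i < u.length → j < u.length →
    (u.getD i 0 < u.getD j 0 ↔ v.getD i 0 < v.getD j 0)

/-- `p` contains the pattern `q`: some subsequence of `p` is order isomorphic to `q`. -/
def ContainsPat (p q : List ℕ) : Prop := ∃ s : List ℕ, s.Sublist p ∧ OrderIsoList s q

def AvoidsPat (p q : List ℕ) : Prop := ¬ ContainsPat p q

/-- `p` is a permutation of the values `1, …, p.length`. -/
def IsPermList (p : List ℕ) : Prop := p.Perm (List.range' 1 p.length)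

/-- Skew sum of permutations (in one-line list form). -/
def skewList (p q : List ℕ) : List ℕ := p.map (· + q.length) ++ q

/-- The reverse layered permutation with layer sizes `ks`:
the skew sum of increasing permutations of those lengths. -/
def revLayeredOf : List ℕ → List ℕ
  | [] => []
  | k :: ks => skewList (List.range' 1 k) (revLayeredOf ks)

/-!
An occurrence of 132 or of 213 is a subsequence `a, b, c` with `a < c` whose middle entry lies
outside `[a, c]`; so avoiding both patterns means that every subsequence `a, b, c` with `a < c`
is weakly increasing (`MiddleBetween`). A skew sum of increasing runs has this property because
such a triple cannot begin in an earlier run than the one it ends in. Conversely, let `p` start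
with `v`. The entries after `v` that exceed it come before all entries below it (otherwise
`v`, small, large is a 213) and increase (otherwise they form a 132 with `v`). In a permutation
of `1, …, n` this forces `p = v, v + 1, …, n` followed by a permutation of `1, …, v - 1`, and
induction on the length finishes the proof.
-/

theorem orderIsoList_132_iff {s : List ℕ} :
    OrderIsoList s [1, 3, 2] ↔ ∃ a b c, s = [a, b, c] ∧ a < c ∧ c < b := by
  constructor
  · rintro ⟨hlen, hiso⟩
    obtain ⟨a, b, c, rfl⟩ := List.length_eq_three.1 hlen
    exact ⟨a, b, c, rfl, by simpa using hiso 0 2 (by simp) (by simp),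
      by simpa using hiso 2 1 (by simp) (by simp)⟩
  · rintro ⟨a, b, c, rfl, hac, hcb⟩
    refine ⟨rfl, fun i j hi hj => ?_⟩
    simp only [List.length_cons, List.length_nil] at hi hj
    interval_cases i <;> interval_cases j <;> simp <;> omega

theorem orderIsoList_213_iff {s : List ℕ} :
    OrderIsoList s [2, 1, 3] ↔ ∃ a b c, s = [a, b, c] ∧ b < a ∧ a < c := by
  constructor
  · rintro ⟨hlen, hiso⟩
    obtain ⟨a, b, c, rfl⟩ := List.length_eq_three.1 hlen
    exact ⟨a, b, c, rfl, by simpa using hiso 1 0 (by simp) (by simp),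
      by simpa using hiso 0 2 (by simp) (by simp)⟩
  · rintro ⟨a, b, c, rfl, hba, hac⟩
    refine ⟨rfl, fun i j hi hj => ?_⟩
    simp only [List.length_cons, List.length_nil] at hi hj
    interval_cases i <;> interval_cases j <;> simp <;> omega

def MiddleBetween (p : List ℕ) : Prop :=
  ∀ a b c, [a, b, c].Sublist p → a < c → a ≤ b ∧ b ≤ c

theorem avoidsPat_132_and_213_iff {p : List ℕ} :
    AvoidsPat p [1, 3, 2] ∧ AvoidsPat p [2, 1, 3] ↔ MiddleBetween p := by
  simp only [AvoidsPat, ContainsPat, orderIsoList_132_iff, orderIsoList_213_iff, MiddleBetween]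
  constructor
  · rintro ⟨h132, h213⟩ a b c habc hac
    by_contra! hb
    by_cases hab : a ≤ b
    · exact h132 ⟨_, habc, a, b, c, rfl, hac, hb hab⟩
    · exact h213 ⟨_, habc, a, b, c, rfl, by omega, hac⟩
  · intro h
    constructor
    · rintro ⟨_, habc, a, b, c, rfl, hac, hcb⟩
      have := h a b c habc hac
      omega
    · rintro ⟨_, habc, a, b, c, rfl, hba, hac⟩
      have := h a b c habc hac
      omega

theorem MiddleBetween.sublist {p q : List ℕ} (h : MiddleBetween p) (hqp : q.Sublist p) :
    MiddleBetween q :=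
  fun a b c habc => h a b c (habc.trans hqp)

theorem middleBetween_append {l₁ l₂ : List ℕ} (h₁ : l₁.Pairwise (· < ·))
    (h₁₂ : ∀ x ∈ l₁, ∀ y ∈ l₂, y < x) (h₂ : MiddleBetween l₂) : MiddleBetween (l₁ ++ l₂) := by
  intro a b c habc hac
  obtain ⟨s₁, s₂, hs, hs₁, hs₂⟩ := List.sublist_append_iff.1 habc
  rcases s₁ with _ | ⟨x, _ | ⟨y, _ | ⟨z, _ | ⟨w, s₁⟩⟩⟩⟩ <;>
    simp only [List.cons_append, List.nil_append, List.cons.injEq, List.nil_eq, reduceCtorEq,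
      and_false] at hs
  · exact h₂ a b c (hs ▸ hs₂) hac
  · obtain ⟨rfl, rfl⟩ := hs
    have := h₁₂ a (hs₁.subset (by simp)) c (hs₂.subset (by simp))
    omega
  · obtain ⟨rfl, rfl, rfl⟩ := hs
    have := h₁₂ a (hs₁.subset (by simp)) c (hs₂.subset (by simp))
    omega
  · obtain ⟨rfl, rfl, rfl, -⟩ := hs
    have := h₁.sublist hs₁
    simp only [List.pairwise_cons, List.mem_cons, List.not_mem_nil, or_false, forall_eq_or_imp,
      forall_eq] at this
    omega

theorem le_length_of_mem_revLayeredOf {ks : List ℕ} {x : ℕ} (hx : x ∈ revLayeredOf ks) :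
    x ≤ (revLayeredOf ks).length := by
  induction ks with
  | nil => simp [revLayeredOf] at hx
  | cons k ks ih =>
    simp only [revLayeredOf, skewList, List.mem_append, List.mem_map, List.mem_range'_1] at hx
    simp only [revLayeredOf, skewList, List.length_append, List.length_map, List.length_range']
    rcases hx with ⟨y, hy, rfl⟩ | hx
    · omega
    · have := ih hx; omega

theorem middleBetween_revLayeredOf (ks : List ℕ) : MiddleBetween (revLayeredOf ks) := by
  induction ks with
  | nil => intro a b c h; simp [revLayeredOf] at h
  | cons k ks ih =>
    refine middleBetween_append ((List.pairwise_lt_range' 1).map _ fun a b h => by omega) ?_ ih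
    simp only [List.mem_map, List.mem_range'_1]
    rintro _ ⟨x, hx, rfl⟩ y hy
    have := le_length_of_mem_revLayeredOf hy
    omega

section FirstLayer

variable {v : ℕ} {r : List ℕ}

theorem MiddleBetween.pairwise_takeWhile (h : MiddleBetween (v :: r)) (hnd : (v :: r).Nodup) :
    (r.takeWhile (v < ·)).Pairwise (· < ·) := by
  refine List.pairwise_iff_forall_sublist.2 fun {x y} hxy => ?_
  have hxyr : [x, y].Sublist r := hxy.trans (List.takeWhile_sublist _)
  have hvy : v < y := by simpa using List.mem_takeWhile_imp (hxy.subset (by simp))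
  have hxy_ne : x ≠ y := by simpa using hnd.sublist (hxyr.cons v)
  have := h v x y (hxyr.cons_cons v) hvy
  omega

theorem MiddleBetween.forall_mem_dropWhile_lt (h : MiddleBetween (v :: r))
    (hnd : (v :: r).Nodup) : ∀ y ∈ r.dropWhile (v < ·), y < v := by
  rcases hB : r.dropWhile (v < ·) with _ | ⟨x, B⟩
  · simp
  have hxBr : (x :: B).Sublist r := hB ▸ List.dropWhile_sublist _
  have hvr : v ∉ r := (List.nodup_cons.1 hnd).1
  have hxv : x < v := by
    have hx := List.head_dropWhile_not (v < ·) (l := r) (by simp [hB])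
    simp only [hB, List.head_cons, decide_eq_false_iff_not, not_lt] at hx
    have : x ≠ v := fun hxv => hvr (hxv ▸ hxBr.subset (by simp))
    omega
  intro y hy
  rcases List.mem_cons.1 hy with rfl | hyB
  · exact hxv
  have hxyr : [x, y].Sublist r := ((List.singleton_sublist.2 hyB).cons_cons x).trans hxBr
  have : y ≠ v := fun hyv => hvr (hyv ▸ hxyr.subset (by simp))
  by_contra! hvy
  have := h v x y (hxyr.cons_cons v) (by omega)
  omega

end FirstLayer

theorem IsPermList.eq_range'_of_skew {l₁ l₂ : List ℕ} {v : ℕ} (hp : IsPermList (l₁ ++ l₂))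
    (hl₁ : l₁.Pairwise (· < ·)) (hv : v ∈ l₁) (h₁ : ∀ x ∈ l₁, v ≤ x) (h₂ : ∀ x ∈ l₂, x < v) :
    l₁ = List.range' v ((l₁ ++ l₂).length + 1 - v) ∧ l₂.Perm (List.range' 1 (v - 1)) := by
  have hmem : ∀ x, x ∈ l₁ ++ l₂ ↔ 1 ≤ x ∧ x < 1 + (l₁ ++ l₂).length := fun x => by
    rw [hp.mem_iff, List.mem_range'_1]
  have hv1 := (hmem v).1 (List.mem_append_left _ hv)
  have hnd : (l₁ ++ l₂).Nodup := hp.nodup_iff.2 List.nodup_range'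
  constructor
  · refine hl₁.eq_of_mem_iff (List.pairwise_lt_range' 1) fun x => ?_
    rw [List.mem_range'_1]
    constructor
    · intro hx
      have := (hmem x).1 (List.mem_append_left _ hx)
      have := h₁ x hx
      omega
    · intro hx
      have hxp := (hmem x).2 (by omega)
      rcases List.mem_append.1 hxp with hx₁ | hx₂
      · exact hx₁
      · have := h₂ x hx₂; omega
  · refine (List.perm_ext_iff_of_nodup (hnd.sublist (List.sublist_append_right _ _))
      List.nodup_range').2 fun x => ?_
    rw [List.mem_range'_1]
    constructor
    · intro hx
      have := (hmem x).1 (List.mem_append_right _ hx)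
      have := h₂ x hx
      omega
    · intro hx
      have hxp := (hmem x).2 (by omega)
      rcases List.mem_append.1 hxp with hx₁ | hx₂
      · have := h₁ x hx₁; omega
      · exact hx₂

theorem MiddleBetween.exists_revLayeredOf {p : List ℕ} (hp : IsPermList p) (h : MiddleBetween p) :
    ∃ ks : List ℕ, (∀ k ∈ ks, 0 < k) ∧ p = revLayeredOf ks := by
  induction hn : p.length using Nat.strong_induction_on generalizing p with
  | _ n ih =>
  rcases p with _ | ⟨v, r⟩
  · exact ⟨[], by simp, rfl⟩
  have hnd : (v :: r).Nodup := hp.nodup_iff.2 List.nodup_range'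
  set A := r.takeWhile (v < ·)
  set B := r.dropWhile (v < ·)
  have hsplit : v :: r = (v :: A) ++ B := by simp [A, B]
  have hA : (v :: A).Pairwise (· < ·) :=
    List.pairwise_cons.2 ⟨fun x hx => by simpa using List.mem_takeWhile_imp hx,
      h.pairwise_takeWhile hnd⟩
  have hvA : ∀ x ∈ v :: A, v ≤ x :=
    List.forall_mem_cons.2 ⟨le_rfl, fun x hx => (List.rel_of_pairwise_cons hA hx).le⟩
  obtain ⟨hlayer, hBperm⟩ := (hsplit ▸ hp).eq_range'_of_skew hA List.mem_cons_self hvA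
    (h.forall_mem_dropWhile_lt hnd)
  rw [← hsplit, hn] at hlayer
  have hv1 : 1 ≤ v := (List.mem_range'_1.1 (hp.subset List.mem_cons_self)).1
  have hk : 0 < n + 1 - v := by
    have := congrArg List.length hlayer
    simp only [List.length_cons, List.length_range'] at this
    omega
  have hBlen : B.length = v - 1 := by simpa using hBperm.length_eq
  have hBr : B.Sublist r := List.dropWhile_sublist _
  have hBn : B.length < n := by
    have := hBr.length_le
    simp only [← hn, List.length_cons]
    omega
  obtain ⟨ks, hks, hBks⟩ :=
    ih B.length hBn (by rwa [IsPermList, hBlen]) (h.sublist (hBr.cons v)) rfl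
  refine ⟨(n + 1 - v) :: ks, List.forall_mem_cons.2 ⟨hk, hks⟩, ?_⟩
  rw [hsplit, hlayer, revLayeredOf, skewList, ← hBks, hBlen,
    show (· + (v - 1)) = (v - 1 + ·) from funext fun _ => Nat.add_comm .., List.map_add_range',
    Nat.sub_add_cancel hv1]

theorem stmt7 (p : List ℕ) (hp : IsPermList p) :
    (AvoidsPat p [1, 3, 2] ∧ AvoidsPat p [2, 1, 3]) ↔
      ∃ ks : List ℕ, (∀ k ∈ ks, 0 < k) ∧ p = revLayeredOf ks := by
  rw [avoidsPat_132_and_213_iff]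
  refine ⟨fun h => h.exists_revLayeredOf hp, ?_⟩
  rintro ⟨ks, -, rfl⟩
  exact middleBetween_revLayeredOf ks
end

section
/- For every m ≥ 2, the parallel alternation 2,4,6,...,2m,1,3,5,...,2m−1 is a simple permutation and avoids both 2431 and 3142. -/
/-- The parallel alternation `2, 4, …, 2m, 1, 3, …, 2m-1` (in one-line list form). -/
def parAlt (m : ℕ) : List ℕ :=
  ((List.range' 1 m).map (fun i => 2 * i)) ++ ((List.range' 1 m).map (fun i => 2 * i - 1))

/-- The `len` consecutive positions of `p` starting at `i` carry consecutive values,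
i.e. they form an interval (block) of `p`. -/
def SegIsInterval (p : List ℕ) (i len : ℕ) : Prop :=
  ∃ a, ((p.drop i).take len).Perm (List.range' a len)

/-- `p` is simple: no set of consecutive positions of size strictly between 1 and
`p.length` carries consecutive values. -/
def IsSimpleList (p : List ℕ) : Prop :=
  ∀ i len, i + len ≤ p.length → 2 ≤ len → len < p.length → ¬ SegIsInterval p i len

/-!
Both halves of the parallel alternation are increasing, so every pattern it contains is again a
concatenation of two increasing sequences; `2431` and `3142` are not.
For simplicity: an interval of size at least two contains two consecutive values, which have
different parities and hence lie in different halves. So the interval contains the positions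
`m - 1` and `m`, i.e. the values `2m` and `1`, and must therefore be everything.
-/

namespace OrderIsoList

variable {u v : List ℕ}

theorem take (h : OrderIsoList u v) (k : ℕ) : OrderIsoList (u.take k) (v.take k) := by
  refine ⟨by simp [h.1], fun i j hi hj => ?_⟩
  simp only [List.length_take, lt_min_iff] at hi hj
  simp only [List.getD_eq_getElem?_getD, List.getElem?_take, hi.1, hj.1, if_true]
  simpa only [List.getD_eq_getElem?_getD] using h.2 i j hi.2 hj.2

theorem drop (h : OrderIsoList u v) (k : ℕ) : OrderIsoList (u.drop k) (v.drop k) := by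
  refine ⟨by simp [h.1], fun i j hi hj => ?_⟩
  simp only [List.length_drop] at hi hj
  simp only [List.getD_eq_getElem?_getD, List.getElem?_drop]
  simpa only [List.getD_eq_getElem?_getD] using h.2 (k + i) (k + j) (by omega) (by omega)

theorem pairwise_lt (h : OrderIsoList u v) (hu : u.Pairwise (· < ·)) : v.Pairwise (· < ·) := by
  rw [List.pairwise_iff_getElem] at hu ⊢
  intro i j hi hj hij
  have hi' : i < u.length := h.1 ▸ hi
  have hj' : j < u.length := h.1 ▸ hj
  have hij' := h.2 i j hi' hj'
  rw [List.getD_eq_getElem _ _ hi', List.getD_eq_getElem _ _ hj', List.getD_eq_getElem _ _ hi,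
    List.getD_eq_getElem _ _ hj] at hij'
  exact hij'.1 (hu i j hi' hj' hij)

end OrderIsoList

def TwoAscendingRuns (p : List ℕ) : Prop :=
  ∃ k ≤ p.length, (p.take k).Pairwise (· < ·) ∧ (p.drop k).Pairwise (· < ·)

theorem TwoAscendingRuns.append {u v : List ℕ} (hu : u.Pairwise (· < ·))
    (hv : v.Pairwise (· < ·)) : TwoAscendingRuns (u ++ v) :=
  ⟨u.length, by simp, by rwa [List.take_left' rfl], by rwa [List.drop_left' rfl]⟩

theorem TwoAscendingRuns.sublist {s p : List ℕ} (hp : TwoAscendingRuns p) (hs : s.Sublist p) :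
    TwoAscendingRuns s := by
  obtain ⟨k, -, hl, hr⟩ := hp
  rw [← List.take_append_drop k p, List.sublist_append_iff] at hs
  obtain ⟨s₁, s₂, rfl, h₁, h₂⟩ := hs
  exact .append (hl.sublist h₁) (hr.sublist h₂)

theorem TwoAscendingRuns.of_orderIsoList {u v : List ℕ} (hu : TwoAscendingRuns u)
    (h : OrderIsoList u v) : TwoAscendingRuns v := by
  obtain ⟨k, hk, hl, hr⟩ := hu
  exact ⟨k, h.1 ▸ hk, (h.take k).pairwise_lt hl, (h.drop k).pairwise_lt hr⟩

theorem AvoidsPat.of_twoAscendingRuns {p q : List ℕ} (hp : TwoAscendingRuns p)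
    (hq : ¬ TwoAscendingRuns q) : AvoidsPat p q :=
  fun ⟨_, hs, hiso⟩ => hq ((hp.sublist hs).of_orderIsoList hiso)

theorem twoAscendingRuns_parAlt (m : ℕ) : TwoAscendingRuns (parAlt m) := by
  refine .append ?_ ?_ <;> refine List.pairwise_map.2 ((List.pairwise_lt_range' ..).imp_of_mem ?_)
  · intro a b _ _ hab; omega
  · intro a b ha _ hab; rw [List.mem_range'] at ha; omega

def parAltVal (m k : ℕ) : ℕ := if k < m then 2 * (k + 1) else 2 * (k - m) + 1

theorem parAlt_eq_map_range (m : ℕ) : parAlt m = (List.range (2 * m)).map (parAltVal m) := by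
  have hlen : ((List.range' 1 m).map (fun i => 2 * i)).length = m := by simp
  refine List.ext_getElem (by simp [parAlt]; omega) fun k h _ => ?_
  simp only [parAlt, List.getElem_append, hlen, List.getElem_map, List.getElem_range,
    List.getElem_range', parAltVal]
  split_ifs <;> omega

theorem take_drop_map_range (f : ℕ → ℕ) {n i len : ℕ} (h : i + len ≤ n) :
    (((List.range n).map f).drop i).take len = (List.range' i len).map f := by
  refine List.ext_getElem (by simp; omega) fun k h _ => ?_
  simp

theorem isSimpleList_parAlt (m : ℕ) : IsSimpleList (parAlt m) := by
  rintro i len hle h2 hlt ⟨a, hperm⟩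
  rw [parAlt_eq_map_range, List.length_map, List.length_range] at hle hlt
  rw [parAlt_eq_map_range, take_drop_map_range _ hle] at hperm
  have hmem :
      ∀ x, x ∈ List.range' a len ↔ ∃ k, i ≤ k ∧ k < i + len ∧ parAltVal m k = x := by
    intro x
    rw [← hperm.mem_iff, List.mem_map]
    simp only [List.mem_range'_1]
    grind
  obtain ⟨k, hik, hki, hk⟩ := (hmem a).1 (List.mem_range'.2 ⟨0, by omega, rfl⟩)
  obtain ⟨k', hik', hki', hk'⟩ := (hmem (a + 1)).1 (List.mem_range'.2 ⟨1, by omega, rfl⟩)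
  have hcross : i < m ∧ m < i + len := by
    unfold parAltVal at hk hk'
    split_ifs at hk hk' <;> omega
  have htop := (hmem (2 * m)).2
    ⟨m - 1, by omega, by omega, by unfold parAltVal; split_ifs <;> omega⟩
  have hbot := (hmem 1).2 ⟨m, by omega, by omega, by simp [parAltVal]⟩
  rw [List.mem_range'_1] at htop hbot
  omega

theorem stmt8_general (m : ℕ) :
    IsSimpleList (parAlt m) ∧ AvoidsPat (parAlt m) [2, 4, 3, 1] ∧
      AvoidsPat (parAlt m) [3, 1, 4, 2] :=
  ⟨isSimpleList_parAlt m,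
    .of_twoAscendingRuns (twoAscendingRuns_parAlt m) (by unfold TwoAscendingRuns; decide),
    .of_twoAscendingRuns (twoAscendingRuns_parAlt m) (by unfold TwoAscendingRuns; decide)⟩

theorem stmt8 (m : ℕ) (hm : 2 ≤ m) :
    IsSimpleList (parAlt m) ∧ AvoidsPat (parAlt m) [2, 4, 3, 1] ∧
      AvoidsPat (parAlt m) [3, 1, 4, 2] :=
  stmt8_general m
end

section
/- The only simple permutations avoiding both 2431 and 3142 are 1, 12, 21, and the parallel alternations 2,4,6,...,2m,1,3,5,...,2m−1 for m ≥ 2. -/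
open Set

/- A permutation of length `n` is modelled by `f : ℕ → ℕ` on the positions `0, …, n - 1`, with
values `1, …, n`; the values of `f` from `n` on play no role. -/

def IsSimpleFn (f : ℕ → ℕ) (n : ℕ) : Prop :=
  ∀ i j lo hi, i < j → j < n → 0 < i ∨ j + 1 < n → f '' Icc i j ≠ Icc lo hi

def Avoids2431 (f : ℕ → ℕ) (n : ℕ) : Prop :=
  ∀ a b c d, a < b → b < c → c < d → d < n → ¬ (f d < f a ∧ f a < f c ∧ f c < f b)

def Avoids3142 (f : ℕ → ℕ) (n : ℕ) : Prop :=
  ∀ a b c d, a < b → b < c → c < d → d < n → ¬ (f b < f d ∧ f d < f a ∧ f a < f c)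

section PermFn

variable {f : ℕ → ℕ} {n : ℕ}

theorem IsSimpleFn.ne_add_one_of_strictMonoOn (hs : IsSimpleFn f n) (hn : 3 ≤ n) {a b x y : ℕ}
    (hmono : StrictMonoOn f (Icc a b)) (hbn : b < n) (hx : x ∈ Icc a b) (hy : y ∈ Icc a b) :
    f y ≠ f x + 1 := by
  intro hxy
  have hxy' : x < y := (hmono.lt_iff_lt hx hy).1 (by omega)
  have hxb : x + 1 ≤ b := by have := hy.2; omega
  have hx1 : x + 1 ∈ Icc a b := ⟨by have := hx.1; omega, hxb⟩
  obtain rfl : y = x + 1 := by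
    by_contra hne
    have := hmono hx hx1 (by omega)
    have := hmono hx1 hy (by omega)
    omega
  refine hs x (x + 1) (f x) (f x + 1) (by omega) (by omega) (by omega) (Subset.antisymm ?_ ?_)
  · rintro _ ⟨k, ⟨hk₁, hk₂⟩, rfl⟩
    obtain rfl | rfl : k = x ∨ k = x + 1 := by omega
    exacts [⟨le_rfl, by omega⟩, ⟨by omega, le_of_eq hxy⟩]
  · rintro v ⟨hv₁, hv₂⟩
    obtain rfl | rfl : v = f x ∨ v = f x + 1 := by omega
    exacts [⟨x, ⟨le_rfl, by omega⟩, rfl⟩, ⟨x + 1, ⟨by omega, le_rfl⟩, hxy⟩]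

theorem exists_last_descent {m : ℕ} (h : ¬ StrictMonoOn f (Icc 0 m)) :
    ∃ d < m, f (d + 1) ≤ f d ∧ StrictMonoOn f (Icc (d + 1) m) := by
  obtain ⟨d₀, hd₀m, hd₀⟩ : ∃ d < m, f (d + 1) ≤ f d := by
    by_contra! hasc
    exact h (strictMonoOn_of_lt_add_one ordConnected_Icc fun a _ _ ha => hasc a (by
      simp only [mem_Icc] at ha; omega))
  set d := Nat.findGreatest (fun d => f (d + 1) ≤ f d) (m - 1)
  refine ⟨d, lt_of_le_of_lt (Nat.findGreatest_le _) (by omega),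
    Nat.findGreatest_spec (P := fun d => f (d + 1) ≤ f d) (by omega : d₀ ≤ m - 1) hd₀,
    strictMonoOn_of_lt_add_one ordConnected_Icc fun a _ ha ha₁ => ?_⟩
  simp only [mem_Icc] at ha ha₁
  by_contra! hdesc
  exact Nat.findGreatest_is_greatest (P := fun d => f (d + 1) ≤ f d) (n := m - 1) (by omega)
    (by omega) hdesc

theorem between_descent_of_between (hinj : InjOn f (Iio n)) (h2431 : Avoids2431 f n)
    (h3142 : Avoids3142 f n) {a k d : ℕ} (hak : a < k) (hkd : k < d) (hdn : d + 1 < n)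
    (ha : f (d + 1) < f a ∧ f a < f d) : f (d + 1) < f k ∧ f k < f d := by
  have hk₁ : f k ≠ f (d + 1) := hinj.ne (show k < n by omega) hdn (by omega)
  have hk₂ : f k ≠ f d := hinj.ne (show k < n by omega) (show d < n by omega) (by omega)
  by_contra hk
  rcases Nat.lt_or_gt_of_ne hk₁ with hlt | hgt
  · exact h3142 a k d (d + 1) hak hkd (by omega) hdn ⟨hlt, ha⟩
  · exact h2431 a k d (d + 1) hak hkd (by omega) hdn ⟨ha.1, ha.2, by omega⟩

theorem exists_start_of_descent (hinj : InjOn f (Iio n)) (h2431 : Avoids2431 f n)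
    (h3142 : Avoids3142 f n) {d : ℕ} (hdn : d + 1 < n) :
    ∃ r ≤ d, (∀ k, r ≤ k → k < d → f (d + 1) < f k ∧ f k < f d) ∧
      ∀ k < r, ¬ (f (d + 1) < f k ∧ f k < f d) := by
  classical
  have hex : ∃ r, r ≤ d ∧ ∀ k, r ≤ k → k < d → f (d + 1) < f k ∧ f k < f d :=
    ⟨d, le_rfl, fun k hk hkd => absurd hkd (by omega)⟩
  refine ⟨Nat.find hex, (Nat.find_spec hex).1, (Nat.find_spec hex).2, fun k hk hfk => ?_⟩
  have hkd : k ≤ d := by have := (Nat.find_spec hex).1; omega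
  refine Nat.find_min hex hk ⟨hkd, fun k' hk' hk'd => ?_⟩
  rcases hk'.eq_or_lt with rfl | hlt
  · exact hfk
  · exact between_descent_of_between hinj h2431 h3142 hlt hk'd hdn hfk

theorem exists_end_of_strictMonoOn {s m hi : ℕ} (hrun : StrictMonoOn f (Icc s m)) (hsm : s ≤ m)
    (hs : f s < hi) (hout : ∀ q, m < q → q < n → ¬ (f s < f q ∧ f q < hi)) :
    ∃ e, s ≤ e ∧ e ≤ m ∧ (∀ q, s ≤ q → q ≤ e → f s ≤ f q ∧ f q < hi) ∧
      ∀ q, e < q → q < n → ¬ (f s < f q ∧ f q < hi) := by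
  set e := Nat.findGreatest (fun q => f q < hi) m
  have hse : s ≤ e := Nat.le_findGreatest hsm hs
  have hem : e ≤ m := Nat.findGreatest_le m
  have hfe : f e < hi := Nat.findGreatest_spec (P := fun q => f q < hi) hsm hs
  refine ⟨e, hse, hem, fun q hsq hqe => ⟨?_, ?_⟩, fun q hq hqn => ?_⟩
  · exact hrun.monotoneOn ⟨le_rfl, hsm⟩ ⟨hsq, by omega⟩ hsq
  · exact (hrun.monotoneOn ⟨hsq, by omega⟩ ⟨hse, hem⟩ hqe).trans_lt hfe
  · rcases le_or_gt q m with hqm | hqm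
    · exact fun h => Nat.findGreatest_is_greatest hq hqm h.2
    · exact hout q hqm hqn

theorem descent_eq_top_bottom (hbij : BijOn f (Iio n) (Icc 1 n)) (h2431 : Avoids2431 f n)
    (h3142 : Avoids3142 f n) (hs : IsSimpleFn f n) {d m : ℕ} (hdesc : f (d + 1) < f d)
    (hdm : d < m) (hmn : m < n) (hrun : StrictMonoOn f (Icc (d + 1) m))
    (hout : ∀ q, m < q → q < n → ¬ (f (d + 1) < f q ∧ f q < f d)) :
    f d = n ∧ f (d + 1) = 1 := by
  obtain ⟨r, hrd, hr_in, hr_out⟩ := exists_start_of_descent hbij.injOn h2431 h3142 (d := d)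
    (by omega)
  obtain ⟨e, hde, hem, he_in, he_out⟩ := exists_end_of_strictMonoOn hrun (by omega) hdesc hout
  have hmaps : MapsTo f (Icc r e) (Icc (f (d + 1)) (f d)) := by
    rintro k ⟨hrk, hke⟩
    rcases lt_trichotomy k d with hk | rfl | hk
    · exact ⟨(hr_in k hrk hk).1.le, (hr_in k hrk hk).2.le⟩
    · exact ⟨hdesc.le, le_rfl⟩
    · exact ⟨(he_in k hk hke).1, (he_in k hk hke).2.le⟩
  have hlo : 1 ≤ f (d + 1) := (hbij.mapsTo (show d + 1 < n by omega)).1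
  have hhi : f d ≤ n := (hbij.mapsTo (show d < n by omega)).2
  have hsurj : SurjOn f (Icc r e) (Icc (f (d + 1)) (f d)) := by
    rintro v ⟨hv₁, hv₂⟩
    rcases hv₁.eq_or_lt with rfl | hv₁
    · exact ⟨d + 1, ⟨by omega, hde⟩, rfl⟩
    rcases hv₂.eq_or_lt with rfl | hv₂
    · exact ⟨d, ⟨hrd, by omega⟩, rfl⟩
    obtain ⟨k, hk, rfl⟩ := hbij.surjOn (show v ∈ Icc 1 n from ⟨by omega, by omega⟩)
    exact ⟨k, ⟨not_lt.1 fun h => hr_out k h ⟨hv₁, hv₂⟩,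
      not_lt.1 fun h => he_out k h hk ⟨hv₁, hv₂⟩⟩, rfl⟩
  have hwhole : r = 0 ∧ e + 1 = n := by
    by_contra h
    exact hs r e _ _ (by omega) (by omega) (by omega) (hmaps.image_subset.antisymm hsurj)
  obtain ⟨k₁, hk₁, hfk₁⟩ := hbij.surjOn (show 1 ∈ Icc 1 n from ⟨le_rfl, by omega⟩)
  obtain ⟨kₙ, hkₙ, hfkₙ⟩ := hbij.surjOn (show n ∈ Icc 1 n from ⟨by omega, le_rfl⟩)
  have h₁ := hmaps (show k₁ ∈ Icc r e from ⟨by omega, by simp only [mem_Iio] at hk₁; omega⟩)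
  have hₙ := hmaps (show kₙ ∈ Icc r e from ⟨by omega, by simp only [mem_Iio] at hkₙ; omega⟩)
  rw [hfk₁, mem_Icc] at h₁
  rw [hfkₙ, mem_Icc] at hₙ
  omega

theorem exists_two_runs (hbij : BijOn f (Iio n) (Icc 1 n)) (h2431 : Avoids2431 f n)
    (h3142 : Avoids3142 f n) (hs : IsSimpleFn f n) (hn : 3 ≤ n) :
    ∃ c, c + 1 < n ∧ f c = n ∧ f (c + 1) = 1 ∧
      StrictMonoOn f (Icc 0 c) ∧ StrictMonoOn f (Icc (c + 1) (n - 1)) := by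
  have hnotmono : ¬ StrictMonoOn f (Icc 0 (n - 1)) := by
    intro hmono
    obtain ⟨q₁, hq₁, hfq₁⟩ := hbij.surjOn (show 1 ∈ Icc 1 n from ⟨le_rfl, by omega⟩)
    obtain ⟨q₂, hq₂, hfq₂⟩ := hbij.surjOn (show 2 ∈ Icc 1 n from ⟨by omega, by omega⟩)
    simp only [mem_Iio] at hq₁ hq₂
    exact hs.ne_add_one_of_strictMonoOn hn hmono (by omega) (x := q₁) (y := q₂)
      ⟨Nat.zero_le _, by omega⟩ ⟨Nat.zero_le _, by omega⟩ (by omega)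
  obtain ⟨c, hcn, hcdesc, htail⟩ := exists_last_descent hnotmono
  have hcdesc' : f (c + 1) < f c :=
    hcdesc.lt_of_ne (hbij.injOn.ne (show c + 1 < n by omega) (show c < n by omega) (by omega))
  obtain ⟨hfc, hfc₁⟩ := descent_eq_top_bottom hbij h2431 h3142 hs hcdesc' hcn (by omega) htail
    (fun q hq hqn _ => by omega)
  refine ⟨c, by omega, hfc, hfc₁, ?_, htail⟩
  by_contra hnot
  obtain ⟨d, hdc, hddesc, hrun⟩ := exists_last_descent hnot
  have hfd : f d < n := lt_of_le_of_ne (hbij.mapsTo (show d < n by omega)).2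
    (hfc ▸ hbij.injOn.ne (show d < n by omega) (show c < n by omega) (by omega))
  have hddesc' : f (d + 1) < f d :=
    hddesc.lt_of_ne (hbij.injOn.ne (show d + 1 < n by omega) (show d < n by omega) (by omega))
  have hd₁c : d + 1 ≠ c := fun h => by rw [h, hfc] at hddesc'; omega
  have hout : ∀ q, c < q → q < n → ¬ (f (d + 1) < f q ∧ f q < f d) :=
    fun q hcq hqn hq => h3142 d (d + 1) c q (by omega) (by omega) hcq hqn ⟨hq.1, hq.2, by omega⟩
  have := (descent_eq_top_bottom hbij h2431 h3142 hs hddesc' hdc (by omega) hrun hout).1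
  omega

/- The values strictly between `f k` and `f (k + 1)` lie in the other run, where two of them
would be consecutive. -/
theorem add_two_of_runs (hmaps : MapsTo f (Iio n) (Icc 1 n)) (hsurj : SurjOn f (Iio n) (Icc 1 n))
    (hs : IsSimpleFn f n) (hn : 3 ≤ n) {a b a' b' : ℕ} (hA : StrictMonoOn f (Icc a b))
    (hB : StrictMonoOn f (Icc a' b')) (hbn : b < n) (hbn' : b' < n)
    (hcover : ∀ q < n, q ∈ Icc a b ∨ q ∈ Icc a' b') {k : ℕ} (hak : a ≤ k) (hkb : k < b) :
    f (k + 1) = f k + 2 := by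
  have hk : k ∈ Icc a b := ⟨hak, hkb.le⟩
  have hk₁ : k + 1 ∈ Icc a b := ⟨by omega, hkb⟩
  have hlt : f k < f (k + 1) := hA hk hk₁ (by omega)
  have hle : f (k + 1) ≤ n := (hmaps (show k + 1 < n by omega)).2
  have hother : ∀ v, f k < v → v < f (k + 1) → ∃ q ∈ Icc a' b', f q = v := by
    intro v hv₁ hv₂
    obtain ⟨q, hq, rfl⟩ := hsurj (show v ∈ Icc 1 n from ⟨by omega, by omega⟩)
    refine ⟨q, (hcover q hq).resolve_left fun hqA => ?_, rfl⟩
    have := (hA.lt_iff_lt hk hqA).1 hv₁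
    have := (hA.lt_iff_lt hqA hk₁).1 hv₂
    omega
  have hne : f (k + 1) ≠ f k + 1 := hs.ne_add_one_of_strictMonoOn hn hA hbn hk hk₁
  by_contra hne₂
  obtain ⟨q₁, hq₁, hfq₁⟩ := hother (f k + 1) (by omega) (by omega)
  obtain ⟨q₂, hq₂, hfq₂⟩ := hother (f k + 2) (by omega) (by omega)
  exact hs.ne_add_one_of_strictMonoOn hn hB hbn' hq₁ hq₂ (by omega)

theorem eq_add_mul_sub_of_add_one {a b s : ℕ} (h : ∀ k, a ≤ k → k < b → f (k + 1) = f k + s)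
    {k : ℕ} (hak : a ≤ k) (hkb : k ≤ b) : f k = f a + s * (k - a) := by
  induction k, hak using Nat.le_induction with
  | base => simp
  | succ k hak ih =>
    rw [h k hak (by omega), ih (by omega), Nat.succ_sub hak, Nat.mul_succ, add_assoc]

theorem eq_parAlt_of_two_runs (hbij : BijOn f (Iio n) (Icc 1 n)) (hs : IsSimpleFn f n)
    (hn : 3 ≤ n) {c : ℕ} (hcn : c + 1 < n) (hfc : f c = n) (hfc₁ : f (c + 1) = 1)
    (hA : StrictMonoOn f (Icc 0 c)) (hB : StrictMonoOn f (Icc (c + 1) (n - 1))) :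
    n = 2 * (c + 1) ∧ ∀ k < n, f k = if k < c + 1 then 2 * (k + 1) else 2 * (k - (c + 1)) + 1 := by
  have hcover : ∀ q < n, q ∈ Icc 0 c ∨ q ∈ Icc (c + 1) (n - 1) := fun q hq => by
    simp only [mem_Icc]; omega
  have hfA : ∀ k ≤ c, f k = f 0 + 2 * k := fun k hk => by
    simpa using eq_add_mul_sub_of_add_one (fun k _ hk => add_two_of_runs hbij.mapsTo
      hbij.surjOn hs hn hA hB (by omega) (by omega) hcover (Nat.zero_le k) hk) (Nat.zero_le k) hk
  have hfB : ∀ k, c + 1 ≤ k → k < n → f k = 1 + 2 * (k - (c + 1)) := fun k hk hkn => by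
    have := eq_add_mul_sub_of_add_one (fun k hk hk' => add_two_of_runs hbij.mapsTo hbij.surjOn hs
      hn hB hA (by omega) (by omega) (fun q hq => (hcover q hq).symm) hk hk') hk (by omega)
    rwa [hfc₁] at this
  have hf₀ : f 0 = 2 := by
    have h₀ : 1 ≤ f 0 := (hbij.mapsTo (show 0 < n by omega)).1
    have h₀' : f 0 ≠ 1 :=
      hfc₁ ▸ hbij.injOn.ne (show 0 < n by omega) (show c + 1 < n by omega) (by omega)
    obtain ⟨q, hq, hfq⟩ := hbij.surjOn (show 2 ∈ Icc 1 n from ⟨by omega, by omega⟩)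
    simp only [mem_Iio] at hq
    rcases le_or_gt q c with hqc | hqc
    · have := hfA q hqc; omega
    · have := hfB q hqc hq; omega
  have hnc : n = 2 * (c + 1) := by have := hfA c le_rfl; omega
  refine ⟨hnc, fun k hk => ?_⟩
  split_ifs with hkc
  · have := hfA k (by omega); omega
  · have := hfB k (by omega) hk; omega

end PermFn

theorem List.map_getD_sublist {p l : List ℕ} (hl : l.Pairwise (· < ·))
    (hlt : ∀ x ∈ l, x < p.length) : (l.map (p.getD · 0)).Sublist p := by
  have hrange : (List.range p.length).map (p.getD · 0) = p :=
    List.ext_getElem (by simp) fun i h _ => by simp [List.getElem?_eq_getElem (by simpa using h)]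
  have hsub : l.Sublist (List.range p.length) :=
    List.sublist_of_subperm_of_pairwise
      (List.Nodup.subperm (hl.imp ne_of_lt) fun x hx => List.mem_range.2 (hlt x hx)) hl
      List.pairwise_lt_range
  simpa only [hrange] using hsub.map (p.getD · 0)

theorem orderIsoList_2431 {w₁ w₂ w₃ w₄ : ℕ} (h₁ : w₄ < w₁) (h₂ : w₁ < w₃) (h₃ : w₃ < w₂) :
    OrderIsoList [w₁, w₂, w₃, w₄] [2, 4, 3, 1] := by
  refine ⟨rfl, fun i j hi hj => ?_⟩
  simp only [List.length_cons, List.length_nil] at hi hj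
  interval_cases i <;> interval_cases j <;> simp [List.getD] <;> omega

theorem orderIsoList_3142 {w₁ w₂ w₃ w₄ : ℕ} (h₁ : w₂ < w₄) (h₂ : w₄ < w₁) (h₃ : w₁ < w₃) :
    OrderIsoList [w₁, w₂, w₃, w₄] [3, 1, 4, 2] := by
  refine ⟨rfl, fun i j hi hj => ?_⟩
  simp only [List.length_cons, List.length_nil] at hi hj
  interval_cases i <;> interval_cases j <;> simp [List.getD] <;> omega

theorem avoids2431_getD {p : List ℕ} (h : AvoidsPat p [2, 4, 3, 1]) :
    Avoids2431 (p.getD · 0) p.length := fun a b c d hab hbc hcd hd ⟨h₁, h₂, h₃⟩ =>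
  h ⟨_, List.map_getD_sublist (l := [a, b, c, d]) (by simp; omega) (by simp; omega),
    orderIsoList_2431 h₁ h₂ h₃⟩

theorem avoids3142_getD {p : List ℕ} (h : AvoidsPat p [3, 1, 4, 2]) :
    Avoids3142 (p.getD · 0) p.length := fun a b c d hab hbc hcd hd ⟨h₁, h₂, h₃⟩ =>
  h ⟨_, List.map_getD_sublist (l := [a, b, c, d]) (by simp; omega) (by simp; omega),
    orderIsoList_3142 h₁ h₂ h₃⟩

theorem bijOn_getD {p : List ℕ} (hp : IsPermList p) :
    BijOn (p.getD · 0) (Iio p.length) (Icc 1 p.length) := by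
  have hmem : ∀ v, v ∈ p ↔ v ∈ Icc 1 p.length := fun v => by
    rw [hp.mem_iff, List.mem_range'_1, mem_Icc]; omega
  refine ⟨fun k hk => ?_, fun a ha b hb hab => ?_, fun v hv => ?_⟩
  · dsimp only
    rw [List.getD_eq_getElem _ _ hk, ← hmem]
    exact List.getElem_mem hk
  · dsimp only at hab
    rw [List.getD_eq_getElem _ _ ha, List.getD_eq_getElem _ _ hb] at hab
    exact (hp.nodup_iff.2 List.nodup_range').getElem_inj_iff.1 hab
  · obtain ⟨k, hk, rfl⟩ := List.mem_iff_getElem.1 ((hmem v).2 hv)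
    exact ⟨k, hk, List.getD_eq_getElem _ _ hk⟩

theorem isSimpleFn_getD {p : List ℕ} (hp : IsPermList p) (hs : IsSimpleList p) :
    IsSimpleFn (p.getD · 0) p.length := by
  intro i j lo hi hij hjn hproper himage
  set seg := (List.range' i (j + 1 - i)).map (p.getD · 0)
  have hseg : (p.drop i).take (j + 1 - i) = seg :=
    List.ext_getElem (by simp [seg]; omega) fun k hk _ => by
      simp only [List.length_take, List.length_drop] at hk
      simp [seg, List.getElem?_eq_getElem (show i + k < p.length by omega)]
  have hnodup : seg.Nodup := List.Nodup.map_on (fun a ha b hb =>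
    (bijOn_getD hp).injOn (show a < p.length by simp [List.mem_range'_1] at ha; omega)
      (show b < p.length by simp [List.mem_range'_1] at hb; omega)) List.nodup_range'
  have hperm : seg.Perm (List.range' lo (hi + 1 - lo)) := by
    refine (List.perm_ext_iff_of_nodup hnodup List.nodup_range').2 fun v => ?_
    have hv := Set.ext_iff.1 himage v
    simp only [mem_image, mem_Icc] at hv
    simp only [seg, List.mem_map, List.mem_range'_1]
    refine Iff.trans (exists_congr fun k => and_congr_left fun _ => by omega) (hv.trans ?_)
    omega
  have hlen : j + 1 - i = hi + 1 - lo := by simpa [seg] using hperm.length_eq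
  exact hs i (j + 1 - i) (by omega) (by omega) (by omega) ⟨lo, hseg ▸ hlen ▸ hperm⟩

@[simp] theorem parAlt_length (m : ℕ) : (parAlt m).length = 2 * m := by
  simp [parAlt]; omega

theorem parAlt_getElem {m k : ℕ} (hk : k < (parAlt m).length) :
    (parAlt m)[k] = if k < m then 2 * (k + 1) else 2 * (k - m) + 1 := by
  simp only [parAlt, List.getElem_append, List.getElem_map, List.getElem_range', List.length_map,
    List.length_range']
  split_ifs <;> omega

theorem eq_of_isPermList_of_length_le_two {p : List ℕ} (hp : IsPermList p) (hne : p ≠ [])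
    (h : p.length ≤ 2) : p = [1] ∨ p = [1, 2] ∨ p = [2, 1] := by
  have hlen : p.length = 1 ∨ p.length = 2 := by have := List.length_pos_iff.2 hne; omega
  have hmem := List.mem_permutations.2 hp
  rcases hlen with hl | hl <;> rw [hl] at hmem <;>
    simp [List.range', List.permutations] at hmem <;> simp [hmem]

theorem stmt9 (p : List ℕ) (hp : IsPermList p) (hne : p ≠ []) (hs : IsSimpleList p)
    (h1 : AvoidsPat p [2, 4, 3, 1]) (h2 : AvoidsPat p [3, 1, 4, 2]) :
    p = [1] ∨ p = [1, 2] ∨ p = [2, 1] ∨ ∃ m, 2 ≤ m ∧ p = parAlt m := by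
  rcases Nat.lt_or_ge p.length 3 with hsmall | hn
  · rcases eq_of_isPermList_of_length_le_two hp hne (by omega) with h | h | h <;> simp [h]
  obtain ⟨c, hcn, hfc, hfc₁, hA, hB⟩ := exists_two_runs (bijOn_getD hp) (avoids2431_getD h1)
    (avoids3142_getD h2) (isSimpleFn_getD hp hs) hn
  obtain ⟨hnc, hf⟩ := eq_parAlt_of_two_runs (bijOn_getD hp) (isSimpleFn_getD hp hs) hn hcn hfc
    hfc₁ hA hB
  refine Or.inr (Or.inr (Or.inr ⟨c + 1, by omega, List.ext_getElem (by simp [hnc]) ?_⟩))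
  intro k hk _
  rw [parAlt_getElem, ← hf k hk, List.getD_eq_getElem _ _ hk]
end

section
/- A permutation is sortable by the PS machine (a pop stack followed directly by a stack) if and only if it avoids the three patterns 2431, 3142, and 3241. -/
open List Relation

/-!
An entry `s` on the stack is lost once the remaining input has a larger entry before a smaller one
(`s` is straddled): the larger one must be stacked above `s` before the smaller one is output.

Necessity: when the first entry of an occurrence of 2431, 3142 or 3241 is read into a block, the
block, being increasing, holds at most the next entry of the occurrence, and two of the entries
left in the input straddle the first one, which is then on the stack.

Sufficiency: output whenever possible, and otherwise push the longest increasing run of input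
below the top of the stack. If the run stops at an entry `y` below its last entry `m`, an entry of
the run straddled by the remaining input forms one of the patterns with `m` and `y`; if it stops
at `y` above the top `s₀` of the stack, `y` and the smaller straddling entry straddle `s₀` too.
-/

/-- `PSSortsFrom inp st next`: from input `inp`, an empty pop stack and stack `st` (top first), the
PS machine can output `next, next + 1, …`. A `block` `B` of input is read into the pop stack and
emptied at once, so it lands on the stack in input order; the stack stays increasing, since it is
output in increasing order. -/
inductive PSSortsFrom : List ℕ → List ℕ → ℕ → Prop
  | nil (next : ℕ) : PSSortsFrom [] [] next
  | output {inp st : List ℕ} {next : ℕ} :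
      PSSortsFrom inp st (next + 1) → PSSortsFrom inp (next :: st) next
  | block {B inp st : List ℕ} {next : ℕ} (hB : B ≠ []) (hsorted : (B ++ st).Pairwise (· < ·)) :
      PSSortsFrom inp (B ++ st) next → PSSortsFrom (B ++ inp) st next

lemma reflTransGen_read_block (B inp ps st out : List ℕ) :
    ReflTransGen PSStep (B ++ inp, ps, st, out) (inp, B.reverse ++ ps, st, out) := by
  induction B generalizing ps with
  | nil => exact .refl
  | cons x B ih => exact .head (.input x _ ps st out) (by simpa using ih (x :: ps))

lemma PSSortsFrom.reflTransGen {inp st : List ℕ} {next : ℕ} (h : PSSortsFrom inp st next)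
    (out : List ℕ) :
    ReflTransGen PSStep (inp, [], st, out)
      ([], [], [], out ++ range' next (inp.length + st.length)) := by
  induction h generalizing out with
  | nil => simpa using ReflTransGen.refl
  | @output inp st next _ ih =>
    refine .head (.output inp [] st out next) ?_
    simpa [← Nat.add_assoc, range'_succ] using ih (out ++ [next])
  | @block B inp st next hB _ _ ih =>
    refine (reflTransGen_read_block B inp [] st out).trans
      (.head (.transfer _ _ st out (by simpa using hB)) ?_)
    simpa [Nat.add_assoc, Nat.add_left_comm] using ih out

lemma exists_stack_sublist_of_reflTransGen {inp ps st out fin : List ℕ}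
    (h : ReflTransGen PSStep (inp, ps, st, out) ([], [], [], fin)) :
    ∃ R, fin = out ++ R ∧ st <+ R := by
  generalize hs : (inp, ps, st, out) = s at h
  induction h using ReflTransGen.head_induction_on generalizing inp ps st out with
  | refl => cases hs; exact ⟨[], by simp⟩
  | head step _ ih =>
    subst hs
    cases step with
    | input => exact ih rfl
    | transfer =>
      obtain ⟨R, rfl, hR⟩ := ih rfl
      exact ⟨R, rfl, (sublist_append_right _ _).trans hR⟩
    | output _ _ _ _ x =>
      obtain ⟨R, rfl, hR⟩ := ih rfl
      exact ⟨x :: R, by simp, hR.cons_cons x⟩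

lemma PSSortsFrom.of_reflTransGen {inp ps st out : List ℕ} {next : ℕ}
    (h : ReflTransGen PSStep (inp, ps, st, out)
      ([], [], [], out ++ range' next (inp.length + ps.length + st.length))) :
    PSSortsFrom (ps.reverse ++ inp) st next := by
  generalize hfin : out ++ range' next _ = fin at h
  generalize hs : (inp, ps, st, out) = s at h
  induction h using ReflTransGen.head_induction_on generalizing inp ps st out next with
  | refl => cases hs; simpa using PSSortsFrom.nil next
  | head step htail ih =>
    subst hs
    cases step with
    | input x inp =>
      simpa using ih (inp := inp) (ps := x :: ps) (next := next)
        (by rw [← hfin]; congr 2; simp only [length_cons]; omega) rfl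
    | transfer inp ps st out hps =>
      have hsorted : (ps.reverse ++ st).Pairwise (· < ·) := by
        obtain ⟨R, hR, hsub⟩ := exists_stack_sublist_of_reflTransGen htail
        rw [← hfin] at hR
        exact (append_cancel_left hR ▸ pairwise_lt_range').sublist hsub
      have hrun : PSSortsFrom inp (ps.reverse ++ st) next := by
        simpa using ih (next := next)
          (by rw [← hfin]; congr 2; simp only [length_nil, length_append, length_reverse]; omega)
          rfl
      exact .block (by simpa using hps) hsorted hrun
    | output inp ps st out x =>
      obtain ⟨R, hR, -⟩ := exists_stack_sublist_of_reflTransGen htail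
      have hlen : inp.length + ps.length + (x :: st).length
          = inp.length + ps.length + st.length + 1 := by simp only [length_cons]; omega
      rw [← hfin, hlen, range'_succ] at hR
      obtain ⟨rfl, -⟩ := cons_eq_cons.1 (append_cancel_left (hR.trans (append_assoc ..)))
      exact .output (ih (next := next + 1) (by simp [← hfin, ← Nat.add_assoc, range'_succ]) rfl)

theorem psSortable_iff_psSortsFrom (p : List ℕ) : PSSortable p ↔ PSSortsFrom p [] 1 :=
  ⟨fun h => by
    simpa using PSSortsFrom.of_reflTransGen (ps := []) (st := []) (out := [])
      (by simpa [PSSortable] using h),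
    fun h => by simpa [PSSortable] using h.reflTransGen []⟩

def HasPSPattern (l : List ℕ) : Prop :=
  ∃ a b c d, a < b ∧ b < c ∧ c < d ∧ ([b, d, c, a] <+ l ∨ [c, a, d, b] <+ l ∨ [c, b, d, a] <+ l)

lemma HasPSPattern.mono {l₁ l₂ : List ℕ} (h : l₁ <+ l₂) : HasPSPattern l₁ → HasPSPattern l₂ :=
  fun ⟨a, b, c, d, hab, hbc, hcd, hocc⟩ =>
    ⟨a, b, c, d, hab, hbc, hcd, hocc.imp (·.trans h) (Or.imp (·.trans h) (·.trans h))⟩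

lemma containsPat_iff_exists_four {p : List ℕ} {q₀ q₁ q₂ q₃ : ℕ} :
    ContainsPat p [q₀, q₁, q₂, q₃] ↔
      ∃ x₀ x₁ x₂ x₃, [x₀, x₁, x₂, x₃] <+ p ∧ OrderIsoList [x₀, x₁, x₂, x₃] [q₀, q₁, q₂, q₃] := by
  refine ⟨fun ⟨s, hs, hiso⟩ => ?_, fun ⟨_, _, _, _, hs, hiso⟩ => ⟨_, hs, hiso⟩⟩
  match s, hiso.1 with
  | [x₀, x₁, x₂, x₃], _ => exact ⟨x₀, x₁, x₂, x₃, hs, hiso⟩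

lemma orderIsoList_2431_iff {x₀ x₁ x₂ x₃ : ℕ} :
    OrderIsoList [x₀, x₁, x₂, x₃] [2, 4, 3, 1] ↔ x₃ < x₀ ∧ x₀ < x₂ ∧ x₂ < x₁ := by
  refine ⟨fun ⟨_, h⟩ => ⟨(h 3 0 (by simp) (by simp)).2 (by decide),
    (h 0 2 (by simp) (by simp)).2 (by decide), (h 2 1 (by simp) (by simp)).2 (by decide)⟩,
    fun h => ⟨rfl, fun i j hi hj => ?_⟩⟩
  simp only [length_cons, length_nil] at hi hj
  interval_cases i <;> interval_cases j <;> simp <;> omega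

lemma orderIsoList_3142_iff {x₀ x₁ x₂ x₃ : ℕ} :
    OrderIsoList [x₀, x₁, x₂, x₃] [3, 1, 4, 2] ↔ x₁ < x₃ ∧ x₃ < x₀ ∧ x₀ < x₂ := by
  refine ⟨fun ⟨_, h⟩ => ⟨(h 1 3 (by simp) (by simp)).2 (by decide),
    (h 3 0 (by simp) (by simp)).2 (by decide), (h 0 2 (by simp) (by simp)).2 (by decide)⟩,
    fun h => ⟨rfl, fun i j hi hj => ?_⟩⟩
  simp only [length_cons, length_nil] at hi hj
  interval_cases i <;> interval_cases j <;> simp <;> omega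

lemma orderIsoList_3241_iff {x₀ x₁ x₂ x₃ : ℕ} :
    OrderIsoList [x₀, x₁, x₂, x₃] [3, 2, 4, 1] ↔ x₃ < x₁ ∧ x₁ < x₀ ∧ x₀ < x₂ := by
  refine ⟨fun ⟨_, h⟩ => ⟨(h 3 1 (by simp) (by simp)).2 (by decide),
    (h 1 0 (by simp) (by simp)).2 (by decide), (h 0 2 (by simp) (by simp)).2 (by decide)⟩,
    fun h => ⟨rfl, fun i j hi hj => ?_⟩⟩
  simp only [length_cons, length_nil] at hi hj
  interval_cases i <;> interval_cases j <;> simp <;> omega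

theorem hasPSPattern_iff (p : List ℕ) :
    HasPSPattern p ↔
      ContainsPat p [2, 4, 3, 1] ∨ ContainsPat p [3, 1, 4, 2] ∨ ContainsPat p [3, 2, 4, 1] := by
  simp only [containsPat_iff_exists_four, orderIsoList_2431_iff, orderIsoList_3142_iff,
    orderIsoList_3241_iff]
  constructor
  · rintro ⟨a, b, c, d, hab, hbc, hcd, h | h | h⟩
    · exact .inl ⟨b, d, c, a, h, hab, hbc, hcd⟩
    · exact .inr (.inl ⟨c, a, d, b, h, hab, hbc, hcd⟩)
    · exact .inr (.inr ⟨c, b, d, a, h, hab, hbc, hcd⟩)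
  · rintro (⟨x₀, x₁, x₂, x₃, h, h₁, h₂, h₃⟩ | ⟨x₀, x₁, x₂, x₃, h, h₁, h₂, h₃⟩ |
      ⟨x₀, x₁, x₂, x₃, h, h₁, h₂, h₃⟩)
    · exact ⟨x₃, x₀, x₂, x₁, h₁, h₂, h₃, .inl h⟩
    · exact ⟨x₁, x₃, x₀, x₂, h₁, h₂, h₃, .inr (.inl h)⟩
    · exact ⟨x₃, x₁, x₀, x₂, h₁, h₂, h₃, .inr (.inr h)⟩

def Straddled (l : List ℕ) (s : ℕ) : Prop := ∃ d b, [d, b] <+ l ∧ b < s ∧ s < d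

lemma Straddled.mono {l₁ l₂ : List ℕ} {s : ℕ} (h : l₁ <+ l₂) : Straddled l₁ s → Straddled l₂ s :=
  fun ⟨d, b, hdb, hb, hd⟩ => ⟨d, b, hdb.trans h, hb, hd⟩

lemma PSSortsFrom.le_of_mem {inp st : List ℕ} {next v : ℕ} (h : PSSortsFrom inp st next)
    (hv : v ∈ inp ++ st) : next ≤ v := by
  induction h with
  | nil => simp at hv
  | output _ ih =>
    rcases mem_append.1 hv with hv | hv
    · exact Nat.le_of_succ_le (ih (mem_append_left _ hv))
    · rcases mem_cons.1 hv with rfl | hv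
      · rfl
      · exact Nat.le_of_succ_le (ih (mem_append_right _ hv))
  | block _ _ _ ih => exact ih (by simp_all [or_left_comm])

lemma mem_or_cons_sublist_of_cons_sublist_append {α : Type*} {a : α} {l L R : List α}
    (h : a :: l <+ L ++ R) : a ∈ L ∨ a :: l <+ R := by
  obtain ⟨_ | ⟨b, l₁⟩, l₂, hl, h₁, h₂⟩ := sublist_append_iff.1 h
  · exact .inr (by simpa [hl] using h₂)
  · obtain ⟨rfl, -⟩ := cons_eq_cons.1 hl
    exact .inl (h₁.subset mem_cons_self)

lemma sublist_of_cons_cons_sublist_append {α : Type*} [Preorder α] {x y : α} {l B R : List α}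
    (hB : B.Pairwise (· < ·)) (hyx : y < x) (h : x :: y :: l <+ B ++ R) : y :: l <+ R := by
  obtain ⟨_ | ⟨b, _ | ⟨c, l₁⟩⟩, l₂, hl, h₁, h₂⟩ := sublist_append_iff.1 h
  · exact (sublist_cons_self x _).trans (by simpa [hl] using h₂)
  · simp_all
  · simp only [cons_append, cons.injEq] at hl
    obtain ⟨rfl, rfl, -⟩ := hl
    exact absurd ((pairwise_cons.1 (hB.sublist h₁)).1 y mem_cons_self) (lt_asymm hyx)

theorem PSSortsFrom.not_hasPSPattern {inp st : List ℕ} {next : ℕ} (h : PSSortsFrom inp st next) :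
    ¬HasPSPattern inp ∧ ∀ s ∈ st, ¬Straddled inp s := by
  induction h with
  | nil => exact ⟨fun ⟨_, _, _, _, _, _, _, h⟩ => by simp at h, by simp⟩
  | @output inp st next hrun ih =>
    refine ⟨ih.1, ?_⟩
    intro s hs
    rcases mem_cons.1 hs with rfl | hs
    · rintro ⟨d, b, hdb, hb, -⟩
      have hb_mem : b ∈ inp ++ st := mem_append_left _ (hdb.subset (by simp))
      exact absurd (hrun.le_of_mem hb_mem) (by omega)
    · exact ih.2 s hs
  | @block B inp st next _ hsorted _ ih =>
    obtain ⟨hpat, hstr⟩ := ih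
    obtain ⟨hB, -, hBst⟩ := pairwise_append.1 hsorted
    have hstrB (s : ℕ) (hs : s ∈ B) : ¬Straddled inp s := hstr s (mem_append_left _ hs)
    refine ⟨?_, fun s hs ⟨d, b, hdb, hb, hsd⟩ => ?_⟩
    · rintro ⟨a, b, c, d, hab, hbc, hcd, h | h | h⟩
      · rcases mem_or_cons_sublist_of_cons_sublist_append h with hb | h'
        · exact hstrB b hb ⟨c, a, sublist_of_cons_cons_sublist_append hB hcd
            ((sublist_cons_self b _).trans h), hab, hbc⟩
        · exact hpat ⟨a, b, c, d, hab, hbc, hcd, .inl h'⟩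
      · rcases mem_or_cons_sublist_of_cons_sublist_append h with hc | h'
        · exact hstrB c hc ⟨d, b, (sublist_cons_self a _).trans
            (sublist_of_cons_cons_sublist_append hB (hab.trans hbc) h), hbc, hcd⟩
        · exact hpat ⟨a, b, c, d, hab, hbc, hcd, .inr (.inl h')⟩
      · rcases mem_or_cons_sublist_of_cons_sublist_append h with hc | h'
        · exact hstrB c hc ⟨d, a, (sublist_cons_self b _).trans
            (sublist_of_cons_cons_sublist_append hB hbc h), hab.trans hbc, hcd⟩
        · exact hpat ⟨a, b, c, d, hab, hbc, hcd, .inr (.inr h')⟩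
    · rcases mem_or_cons_sublist_of_cons_sublist_append hdb with hd | h'
      · exact absurd (hBst d hd s hs) (by omega)
      · exact hstr s (mem_append_right _ hs) ⟨d, b, h', hb, hsd⟩

lemma PSSortsFrom.of_perm_range' {st : List ℕ} {next : ℕ} (hst : st.Pairwise (· < ·))
    (hperm : st ~ range' next st.length) : PSSortsFrom [] st next := by
  generalize st.length = k at hperm
  obtain rfl := hperm.eq_of_pairwise (fun a _ _ _ hab hba => absurd (hab.trans hba) (lt_irrefl a))
    hst pairwise_lt_range'
  clear hst hperm
  induction k generalizing next with
  | zero => exact .nil next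
  | succ k ih => rw [range'_succ]; exact ih.output

lemma not_mem_of_head?_ne {inp st : List ℕ} {next n : ℕ} (hperm : (inp ++ st) ~ range' next n)
    (hst : st.Pairwise (· < ·)) (hout : st.head? ≠ some next) : next ∉ st := by
  cases st with
  | nil => simp
  | cons s₀ st =>
    intro hmem
    rcases mem_cons.1 hmem with rfl | hmem
    · simp at hout
    · exact absurd ((pairwise_cons.1 hst).1 _ hmem)
        (not_lt.2 (mem_range'_1.1 (hperm.subset (by simp : s₀ ∈ inp ++ s₀ :: st))).1)

lemma exists_maximal_sorted_prefix (P : ℕ → Prop) (x : ℕ) (l : List ℕ) (hx : P x) :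
    ∃ B₀ m r, x :: l = B₀ ++ m :: r ∧ (B₀ ++ [m]).Pairwise (· < ·) ∧
      (∀ v ∈ B₀ ++ [m], x ≤ v ∧ P v) ∧ ∀ y ∈ r.head?, y ≤ m ∨ ¬P y := by
  induction l generalizing x with
  | nil => exact ⟨[], x, [], rfl, by simp, by simpa using hx, by simp⟩
  | cons y l ih =>
    by_cases hy : x < y ∧ P y
    · obtain ⟨B₀, m, r, hl, hsorted, hP, hstop⟩ := ih y hy.2
      refine ⟨x :: B₀, m, r, by rw [hl]; rfl, ?_, ?_, hstop⟩
      · exact pairwise_cons.2 ⟨fun v hv => hy.1.trans_le (hP v hv).1, hsorted⟩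
      · rintro v (_ | ⟨_, hv⟩)
        · exact ⟨le_rfl, hx⟩
        · exact ⟨hy.1.le.trans (hP v hv).1, (hP v hv).2⟩
    · refine ⟨[], x, y :: l, rfl, by simp, by simpa using hx, ?_⟩
      simp only [head?_cons, Option.mem_def, Option.some.injEq, forall_eq']
      by_cases hxy : x < y
      · exact .inr fun hPy => hy ⟨hxy, hPy⟩
      · exact .inl (not_lt.1 hxy)

lemma head_lt_of_not_straddled {x s next n : ℕ} {l st : List ℕ}
    (hperm : (x :: l ++ st) ~ range' next n) (hnext : next ∉ st) (hs : s ∈ st)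
    (h : ¬Straddled (x :: l) s) : x < s := by
  have hnd := hperm.nodup_iff.2 nodup_range'
  have hge (v : ℕ) (hv : v ∈ x :: l ++ st) : next ≤ v := (mem_range'_1.1 (hperm.subset hv)).1
  have hnext_lt : next < s :=
    lt_of_le_of_ne (hge s (mem_append_right _ hs)) fun h => hnext (h ▸ hs)
  have hnext_mem : next ∈ x :: l := by
    have hn : 0 < n := by
      have := hperm.length_eq
      simp only [cons_append, length_cons, length_append, length_range'] at this
      omega
    exact (mem_append.1 (hperm.symm.subset (mem_range'_1.2 ⟨le_rfl, by omega⟩))).resolve_right hnext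
  have hxs : x ≠ s := fun hxs => (nodup_append.1 hnd).2.2 x mem_cons_self s hs hxs
  by_contra! hsx
  rcases mem_cons.1 hnext_mem with rfl | hnext_mem
  · omega
  · exact h ⟨x, next, cons_sublist_cons.2 (singleton_sublist.2 hnext_mem), hnext_lt,
      lt_of_le_of_ne hsx hxs.symm⟩

lemma not_straddled_of_lt_last {B₀ r : List ℕ} {m y s : ℕ} (hB₀ : ∀ v ∈ B₀, v < m)
    (hmr : m ∉ y :: r) (hyr : y ∉ r) (hym : y < m) (hpat : ¬HasPSPattern (B₀ ++ m :: y :: r))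
    (hs : s ∈ B₀ ++ [m]) : ¬Straddled (y :: r) s := by
  rintro ⟨d, b, hdb, hb, hsd⟩
  have hsm : s ≤ m := by
    rcases mem_append.1 hs with hs | hs
    · exact (hB₀ s hs).le
    · exact (mem_singleton.1 hs).le
  have hdm : d ≠ m := fun h => hmr (h ▸ hdb.subset (by simp))
  rcases lt_or_gt_of_ne hdm with hdm | hdm
  · have hsB₀ : s ∈ B₀ := (mem_append.1 hs).resolve_right (by simp only [mem_singleton]; omega)
    exact hpat ⟨b, s, d, m, hb, hsd, hdm, .inl
      ((singleton_sublist.2 hsB₀).append (hdb.cons_cons m))⟩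
  · have hdb' : [d, b] <+ r := by
      rcases sublist_cons_iff.1 hdb with h | ⟨_, h, -⟩
      · exact h
      · exact absurd (cons_eq_cons.1 h).1 (by omega)
    have hocc : [m, y, d, b] <+ B₀ ++ m :: y :: r :=
      (hdb'.cons_cons y |>.cons_cons m).trans (sublist_append_right _ _)
    have hby : b ≠ y := fun h => hyr (h ▸ hdb'.subset (by simp))
    rcases lt_or_gt_of_ne hby with hby | hby
    · exact hpat ⟨b, y, m, d, hby, hym, hdm, .inr (.inr hocc)⟩
    · exact hpat ⟨y, b, m, d, hby, by omega, hdm, .inr (.inl hocc)⟩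

lemma not_straddled_of_lt_of_lt_head {y s s₀ : ℕ} {r : List ℕ} (hs : s < s₀) (hy : s₀ < y)
    (h : ¬Straddled (y :: r) s₀) : ¬Straddled (y :: r) s := by
  rintro ⟨d, b, hdb, hb, -⟩
  have hbr : b ∈ r := by
    rcases sublist_cons_iff.1 hdb with h' | ⟨_, h', h''⟩
    · exact h'.subset (by simp)
    · obtain ⟨-, rfl⟩ := cons_eq_cons.1 h'
      exact h''.subset mem_cons_self
  exact h ⟨y, b, cons_sublist_cons.2 (singleton_sublist.2 hbr), by omega, hy⟩

lemma not_straddled_of_maximal_block {B₀ r st : List ℕ} {m : ℕ} (hnd : (B₀ ++ m :: r ++ st).Nodup)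
    (hB₀ : ∀ v ∈ B₀, v < m) (hBst : ∀ v ∈ B₀ ++ [m], ∀ s ∈ st, v < s)
    (hstop : ∀ y ∈ r.head?, y ≤ m ∨ ¬∀ s ∈ st, y < s) (hpat : ¬HasPSPattern (B₀ ++ m :: r))
    (hstr : ∀ s ∈ st, ¬Straddled (B₀ ++ m :: r) s) : ∀ s ∈ B₀ ++ [m] ++ st, ¬Straddled r s := by
  have hr : r <+ B₀ ++ m :: r := (sublist_cons_self m r).trans (sublist_append_right _ _)
  intro s hs
  rcases mem_append.1 hs with hs | hs
  swap
  · exact fun h => hstr s hs (h.mono hr)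
  rcases r with _ | ⟨y, r⟩
  · rintro ⟨d, b, h, -⟩
    simp at h
  have hmyr : (m :: y :: r ++ st).Nodup := hnd.sublist (by simp)
  simp only [cons_append, nodup_cons, mem_cons, mem_append, not_or] at hmyr
  obtain ⟨⟨hmy, hmr, -⟩, ⟨hyr, hyst⟩, -⟩ := hmyr
  rcases hstop y rfl with hym | hy
  · exact not_straddled_of_lt_last hB₀ (by simp [hmy, hmr]) hyr (lt_of_le_of_ne hym (Ne.symm hmy))
      hpat hs
  · simp only [not_forall, not_lt, exists_prop] at hy
    obtain ⟨s', hs', hs'y⟩ := hy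
    exact not_straddled_of_lt_of_lt_head (hBst s hs s' hs')
      (lt_of_le_of_ne hs'y fun h => hyst (h ▸ hs')) fun h => hstr s' hs' (h.mono hr)

theorem PSSortsFrom.of_not_hasPSPattern {inp st : List ℕ} {next : ℕ}
    (hperm : (inp ++ st) ~ range' next (inp.length + st.length)) (hst : st.Pairwise (· < ·))
    (hpat : ¬HasPSPattern inp) (hstr : ∀ s ∈ st, ¬Straddled inp s) : PSSortsFrom inp st next := by
  induction hn : 2 * inp.length + st.length using Nat.strong_induction_on
    generalizing inp st next with
  | _ n ih =>
  subst hn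
  rcases inp with _ | ⟨x, l⟩
  · exact .of_perm_range' hst (by simpa using hperm)
  by_cases hout : st.head? = some next
  · obtain ⟨st, rfl⟩ : ∃ st', st = next :: st' := by cases st <;> simp_all
    refine .output (ih _ (by simp) ?_ hst.of_cons hpat
      (fun s hs => hstr s (mem_cons_of_mem _ hs)) rfl)
    rw [show (x :: l).length + (next :: st).length = (x :: l).length + st.length + 1 by
      simp only [length_cons]; omega,
      range'_succ] at hperm
    exact (perm_middle.symm.trans hperm).cons_inv
  have hnext : next ∉ st := not_mem_of_head?_ne hperm hst hout
  obtain ⟨B₀, m, r, hl, hB, hBst, hstop⟩ :=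
    exists_maximal_sorted_prefix (fun v => ∀ s ∈ st, v < s) x l
      fun s hs => head_lt_of_not_straddled hperm hnext hs (hstr s hs)
  have hsorted : (B₀ ++ [m] ++ st).Pairwise (· < ·) :=
    pairwise_append.2 ⟨hB, hst, fun v hv => (hBst v hv).2⟩
  rw [hl] at hperm hpat hstr ⊢
  rw [← singleton_append, ← append_assoc]
  refine .block (by simp) hsorted (ih _ ?_ ?_ hsorted (hpat ∘ .mono ?_) ?_ rfl)
  · simp only [hl, length_append, length_cons, length_nil]
    omega
  · rw [show r.length + (B₀ ++ [m] ++ st).length = (B₀ ++ m :: r).length + st.length by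
    simp only [length_append, length_cons, length_nil]; omega]
    refine .trans ?_ hperm
    simpa using (perm_append_comm (l₁ := r) (l₂ := B₀ ++ [m])).append_right st
  · exact (sublist_cons_self m r).trans (sublist_append_right _ _)
  · exact not_straddled_of_maximal_block (hperm.nodup_iff.2 nodup_range')
      (fun v hv => (pairwise_append.1 hB).2.2 v hv m (mem_singleton_self m))
      (fun v hv => (hBst v hv).2) hstop hpat hstr

theorem stmt11 (p : List ℕ) (hp : IsPermList p) :
    PSSortable p ↔
      (AvoidsPat p [2, 4, 3, 1] ∧ AvoidsPat p [3, 1, 4, 2] ∧ AvoidsPat p [3, 2, 4, 1]) := by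
  have havoids : (AvoidsPat p [2, 4, 3, 1] ∧ AvoidsPat p [3, 1, 4, 2] ∧
      AvoidsPat p [3, 2, 4, 1]) ↔ ¬HasPSPattern p := by
    simp only [AvoidsPat, hasPSPattern_iff, not_or]
  rw [havoids, psSortable_iff_psSortsFrom]
  exact ⟨fun h => h.not_hasPSPattern.1, fun h =>
    .of_not_hasPSPattern (by simpa [IsPermList] using hp) .nil h (by simp)⟩
end

section
/- A permutation π can be sorted by the PS machine if and only if dividers can be inserted into π to obtain a divided permutation π₁|π₂|⋯|π_t avoiding the divided patterns 21 (within a single block), 2|13, and 2|3|1. -/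
/-- `bs` is a division of `p`: a partition of `p` into consecutive nonempty blocks. -/
def IsDivision (p : List ℕ) (bs : List (List ℕ)) : Prop :=
  bs.flatten = p ∧ ∀ b ∈ bs, b ≠ []

/-- The divided permutation `bs` contains the divided pattern `qs`: one can pick, for each
block of `qs`, a subsequence of a block of `bs` (distinct blocks of `qs` going to distinct
blocks of `bs`, in order) so that the concatenation of the picked subsequences is order
isomorphic to the concatenation of the blocks of `qs`. -/
def DividedContains (bs qs : List (List ℕ)) : Prop :=
  ∃ g : Fin qs.length → Fin bs.length, StrictMono g ∧
    ∃ ch : Fin qs.length → List ℕ,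
      (∀ i, (ch i).Sublist (bs.get (g i))) ∧
      (∀ i, (ch i).length = (qs.get i).length) ∧
      OrderIsoList (List.ofFn ch).flatten qs.flatten

/-!
Read backwards, a sorting run of the PS machine cuts the input into blocks, one per transfer of
the pop stack onto the stack. Every block is increasing, since it lands reversed on a stack that
must be increasing from the top. An entry `y` that still waits for a smaller entry `z` stays on
the stack until `z` is output, so no entry `x > y` may be pushed in the meantime; the patterns
`2|13` and `2|3|1` are exactly the ways in which the blocks would force such a push. Along the
run this is an invariant in which the stack plays the role of one more block in front of the
remaining ones.

Conversely, for such a division the greedy strategy sorts: output the next value while it is on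
top of the stack, and otherwise push the next block through the pop stack. The next value then
lies in the remaining input, and the avoided patterns force the whole block below the stack.
-/

open List Relation

theorem orderIsoList_iff {u v : List ℕ} : OrderIsoList u v ↔ u.length = v.length ∧
    ∀ i < u.length, ∀ j < u.length, (u.getD i 0 < u.getD j 0 ↔ v.getD i 0 < v.getD j 0) :=
  and_congr_right fun _ => ⟨fun h i hi j hj => h i j hi hj, fun h i j hi hj => h i hi j hj⟩

theorem orderIsoList_21 {a c : ℕ} : OrderIsoList [a, c] [2, 1] ↔ c < a := by
  simp only [orderIsoList_iff, length_cons, length_nil, Nat.forall_lt_succ_right]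
  grind

theorem orderIsoList_213 {y z x : ℕ} : OrderIsoList [y, z, x] [2, 1, 3] ↔ z < y ∧ y < x := by
  simp only [orderIsoList_iff, length_cons, length_nil, Nat.forall_lt_succ_right]
  grind

theorem orderIsoList_231 {y x z : ℕ} : OrderIsoList [y, x, z] [2, 3, 1] ↔ z < y ∧ y < x := by
  simp only [orderIsoList_iff, length_cons, length_nil, Nat.forall_lt_succ_right]
  grind

theorem dividedContains_iff {bs qs : List (List ℕ)} :
    DividedContains bs qs ↔ ∃ bs' cs, bs' <+ bs ∧ Forall₂ Sublist cs bs' ∧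
      Forall₂ (fun c q => c.length = q.length) cs qs ∧ OrderIsoList cs.flatten qs.flatten := by
  constructor
  · rintro ⟨g, hg, ch, hsub, hlen, hiso⟩
    refine ⟨ofFn fun i => bs.get (g i), ofFn ch, ?_, ?_, ?_, hiso⟩
    · exact sublist_iff_exists_fin_orderEmbedding_get_eq.mpr
        ⟨(Fin.castOrderIso length_ofFn).toOrderEmbedding.trans
          (OrderEmbedding.ofStrictMono g hg), fun i => get_ofFn _ i⟩
    · exact forall₂_iff_get.mpr ⟨by simp, fun i _ _ => by simpa using hsub _⟩
    · exact forall₂_iff_get.mpr ⟨by simp, fun i _ _ => by simpa using hlen _⟩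
  · rintro ⟨bs', cs, hbs', hsub, hlen, hiso⟩
    obtain ⟨f, hf⟩ := sublist_iff_exists_fin_orderEmbedding_get_eq.mp hbs'
    have hcs : qs.length = cs.length := hlen.length_eq.symm
    have hbs'' : qs.length = bs'.length := hcs.trans hsub.length_eq
    refine ⟨fun i => f (Fin.cast hbs'' i), f.strictMono.comp (Fin.castOrderIso hbs'').strictMono,
      fun i => cs.get (Fin.cast hcs i), fun i => ?_, fun i => ?_, ?_⟩
    · rw [← hf]
      exact (forall₂_iff_get.mp hsub).2 i (hcs ▸ i.2) (hbs'' ▸ i.2)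
    · exact (forall₂_iff_get.mp hlen).2 i (hcs ▸ i.2) i.2
    · have : (ofFn fun i => cs.get (Fin.cast hcs i)) = cs := ext_get (by simp [hcs]) (by simp)
      rwa [this]

theorem dividedContains_21_iff (bs : List (List ℕ)) :
    DividedContains bs [[2, 1]] ↔ ∃ b ∈ bs, ∃ a c, [a, c] <+ b ∧ c < a := by
  rw [dividedContains_iff]
  constructor
  · rintro ⟨bs', cs, hbs', hsub, hlen, hiso⟩
    obtain _ | ⟨hlen₁, _ | _⟩ := hlen
    obtain ⟨a, c, rfl⟩ := length_eq_two.mp hlen₁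
    obtain _ | ⟨hac, _ | _⟩ := hsub
    exact ⟨_, singleton_sublist.mp hbs', a, c, hac, orderIsoList_21.mp (by simpa using hiso)⟩
  · rintro ⟨b, hb, a, c, hac, h⟩
    exact ⟨[b], [[a, c]], singleton_sublist.mpr hb, .cons hac .nil, .cons rfl .nil,
      orderIsoList_21.mpr h⟩

theorem dividedContains_2_13_iff (bs : List (List ℕ)) : DividedContains bs [[2], [1, 3]] ↔
    ∃ b₁ b₂, [b₁, b₂] <+ bs ∧ ∃ y ∈ b₁, ∃ z x, [z, x] <+ b₂ ∧ z < y ∧ y < x := by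
  rw [dividedContains_iff]
  constructor
  · rintro ⟨bs', cs, hbs', hsub, hlen, hiso⟩
    obtain _ | ⟨hlen₁, _ | ⟨hlen₂, _ | _⟩⟩ := hlen
    obtain ⟨y, rfl⟩ := length_eq_one_iff.mp hlen₁
    obtain ⟨z, x, rfl⟩ := length_eq_two.mp hlen₂
    obtain _ | ⟨hy, _ | ⟨hzx, _ | _⟩⟩ := hsub
    exact ⟨_, _, hbs', y, singleton_sublist.mp hy, z, x, hzx,
      orderIsoList_213.mp (by simpa using hiso)⟩
  · rintro ⟨b₁, b₂, h12, y, hy, z, x, hzx, h⟩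
    exact ⟨[b₁, b₂], [[y], [z, x]], h12, .cons (singleton_sublist.mpr hy) (.cons hzx .nil),
      .cons rfl (.cons rfl .nil), orderIsoList_213.mpr h⟩

theorem dividedContains_2_3_1_iff (bs : List (List ℕ)) : DividedContains bs [[2], [3], [1]] ↔
    ∃ b₁ b₂ b₃, [b₁, b₂, b₃] <+ bs ∧ ∃ y ∈ b₁, ∃ x ∈ b₂, ∃ z ∈ b₃, z < y ∧ y < x := by
  rw [dividedContains_iff]
  constructor
  · rintro ⟨bs', cs, hbs', hsub, hlen, hiso⟩
    obtain _ | ⟨hlen₁, _ | ⟨hlen₂, _ | ⟨hlen₃, _ | _⟩⟩⟩ := hlen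
    obtain ⟨y, rfl⟩ := length_eq_one_iff.mp hlen₁
    obtain ⟨x, rfl⟩ := length_eq_one_iff.mp hlen₂
    obtain ⟨z, rfl⟩ := length_eq_one_iff.mp hlen₃
    obtain _ | ⟨hy, _ | ⟨hx, _ | ⟨hz, _ | _⟩⟩⟩ := hsub
    exact ⟨_, _, _, hbs', y, singleton_sublist.mp hy, x, singleton_sublist.mp hx, z,
      singleton_sublist.mp hz, orderIsoList_231.mp (by simpa using hiso)⟩
  · rintro ⟨b₁, b₂, b₃, h123, y, hy, x, hx, z, hz, h⟩
    exact ⟨[b₁, b₂, b₃], [[y], [x], [z]], h123,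
      .cons (singleton_sublist.mpr hy) (.cons (singleton_sublist.mpr hx)
        (.cons (singleton_sublist.mpr hz) .nil)),
      .cons rfl (.cons rfl (.cons rfl .nil)), orderIsoList_231.mpr h⟩

theorem exists_pair_sublist_cons {α : Type*} {R : α → α → Prop} {a : α} {l : List α} :
    (∃ x y, [x, y] <+ a :: l ∧ R x y) ↔ (∃ y ∈ l, R a y) ∨ ∃ x y, [x, y] <+ l ∧ R x y := by
  simp only [sublist_cons_iff, cons.injEq]
  aesop

theorem exists_triple_sublist_cons {α : Type*} {R : α → α → α → Prop} {a : α} {l : List α} :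
    (∃ x y z, [x, y, z] <+ a :: l ∧ R x y z) ↔
      (∃ y z, [y, z] <+ l ∧ R a y z) ∨ ∃ x y z, [x, y, z] <+ l ∧ R x y z := by
  simp only [sublist_cons_iff (l := [_, _, _]), cons.injEq]
  aesop

/-- `y` is the `2` of an occurrence of `2|13` or `2|3|1` in the divided word `[y] :: bs`. -/
def IsPatternTwo (y : ℕ) (bs : List (List ℕ)) : Prop :=
  (∃ b ∈ bs, ∃ z x, [z, x] <+ b ∧ z < y ∧ y < x) ∨
    ∃ b₂ b₃, [b₂, b₃] <+ bs ∧ ∃ x ∈ b₂, ∃ z ∈ b₃, z < y ∧ y < x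

def ContainsPattern : List (List ℕ) → Prop
  | [] => False
  | b :: bs => (∃ y ∈ b, IsPatternTwo y bs) ∨ ContainsPattern bs

theorem containsPattern_iff (bs : List (List ℕ)) : ContainsPattern bs ↔
    DividedContains bs [[2], [1, 3]] ∨ DividedContains bs [[2], [3], [1]] := by
  rw [dividedContains_2_13_iff, dividedContains_2_3_1_iff]
  induction bs with
  | nil => simp [ContainsPattern]
  | cons b bs ih =>
    rw [ContainsPattern, ih, exists_pair_sublist_cons, exists_triple_sublist_cons]
    simp only [IsPatternTwo]
    constructor
    · rintro (⟨y, hy, ⟨b', hb', h⟩ | ⟨b₂, b₃, h23, h⟩⟩ | h13 | h231)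
      · exact .inl (.inl ⟨b', hb', y, hy, h⟩)
      · exact .inr (.inl ⟨b₂, b₃, h23, y, hy, h⟩)
      · exact .inl (.inr h13)
      · exact .inr (.inr h231)
    · rintro ((⟨b', hb', y, hy, h⟩ | h13) | ⟨b₂, b₃, h23, y, hy, h⟩ | h231)
      · exact .inl ⟨y, hy, .inl ⟨b', hb', h⟩⟩
      · exact .inr (.inl h13)
      · exact .inl ⟨y, hy, .inr ⟨b₂, b₃, h23, h⟩⟩
      · exact .inr (.inr h231)

theorem IsPatternTwo.cons {y : ℕ} {bs : List (List ℕ)} (b : List ℕ) (h : IsPatternTwo y bs) :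
    IsPatternTwo y (b :: bs) := by
  rcases h with ⟨b', hb', h⟩ | ⟨b₂, b₃, h23, h⟩
  · exact .inl ⟨b', mem_cons_of_mem b hb', h⟩
  · exact .inr ⟨b₂, b₃, h23.trans (sublist_cons_self b bs), h⟩

theorem isPatternTwo_cons_iff_of_lt {y : ℕ} {b : List ℕ} {bs : List (List ℕ)}
    (hb : ∀ x ∈ b, x < y) : IsPatternTwo y (b :: bs) ↔ IsPatternTwo y bs := by
  refine ⟨?_, IsPatternTwo.cons b⟩
  rintro (⟨b', hb', z, x, hzx, hzy, hyx⟩ | ⟨b₂, b₃, h23, x, hx, h⟩)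
  · rcases mem_cons.mp hb' with rfl | hb'
    · exact absurd (hb x (hzx.subset (by simp))) (by omega)
    · exact .inl ⟨b', hb', z, x, hzx, hzy, hyx⟩
  · rcases sublist_cons_iff.mp h23 with h23 | ⟨r, heq, -⟩
    · exact .inr ⟨b₂, b₃, h23, x, hx, h⟩
    · obtain ⟨z, -, -, hyx⟩ := h
      cases heq
      exact absurd (hb x hx) (by omega)

theorem not_isPatternTwo_of_lt {y : ℕ} {bs : List (List ℕ)} (h : ∀ z ∈ bs.flatten, y < z) :
    ¬ IsPatternTwo y bs := by
  rintro (⟨b, hb, z, x, hzx, hzy, -⟩ | ⟨b₂, b₃, h23, x, -, z, hz, hzy, -⟩)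
  · exact absurd (h z (mem_flatten_of_mem hb (hzx.subset (by simp)))) (by omega)
  · exact absurd (h z (mem_flatten_of_mem (h23.subset (by simp)) hz)) (by omega)

theorem ContainsPattern.mono_head {a a' : List ℕ} {bs : List (List ℕ)} (h : a ⊆ a') :
    ContainsPattern (a :: bs) → ContainsPattern (a' :: bs) :=
  Or.imp_left fun ⟨y, hy, hpat⟩ => ⟨y, h hy, hpat⟩

theorem containsPattern_cons_head_iff {x : ℕ} {a : List ℕ} {bs : List (List ℕ)}
    (hx : ∀ z ∈ bs.flatten, x < z) :
    ContainsPattern ((x :: a) :: bs) ↔ ContainsPattern (a :: bs) := by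
  simp only [ContainsPattern, mem_cons, exists_eq_or_imp, not_isPatternTwo_of_lt hx, false_or]

theorem containsPattern_append_head_iff {a b : List ℕ} {bs : List (List ℕ)}
    (hab : ∀ x ∈ a, ∀ y ∈ b, x < y) :
    ContainsPattern ((a ++ b) :: bs) ↔ ContainsPattern (b :: a :: bs) := by
  have hb : ∀ y ∈ b, IsPatternTwo y (a :: bs) ↔ IsPatternTwo y bs := fun y hy =>
    isPatternTwo_cons_iff_of_lt fun x hx => hab x hx y hy
  simp only [ContainsPattern, mem_append, or_and_right, exists_or]
  grind

theorem range'_one_succ (k : ℕ) : range' 1 (k + 1) = range' 1 k ++ [k + 1] := by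
  rw [range'_1_concat, Nat.add_comm 1]

theorem reflTransGen_psStep_input_all (B : List ℕ) : ∀ inp ps st out : List ℕ,
    ReflTransGen PSStep (B ++ inp, ps, st, out) (inp, B.reverse ++ ps, st, out) := by
  induction B with
  | nil => intros; exact .refl
  | cons x B ih =>
    intro inp ps st out
    exact .head (PSStep.input x (B ++ inp) ps st out) (by simpa using ih inp (x :: ps) st out)

theorem reflTransGen_psStep_block {B : List ℕ} (hB : B ≠ []) (inp st out : List ℕ) :
    ReflTransGen PSStep (B ++ inp, [], st, out) (inp, [], B ++ st, out) :=
  (reflTransGen_psStep_input_all B inp [] st out).tail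
    (by simpa using PSStep.transfer inp B.reverse st out (by simpa using hB))

theorem exists_eq_cons_of_pairwise_lt {α : Type*} [Preorder α] {st : List α} {v : α}
    (hst : st.Pairwise (· < ·))
    (hv : v ∈ st) (hmin : ∀ y ∈ st, v ≤ y) : ∃ st', st = v :: st' := by
  obtain _ | ⟨y, st'⟩ := st
  · simp at hv
  · refine ⟨st', ?_⟩
    rcases mem_cons.mp hv with rfl | hv
    · rfl
    · exact absurd (rel_of_pairwise_cons hst hv) (hmin y mem_cons_self).not_gt

/-- The next value to output, `v`, sits in the input, so a stack entry `y` with `y < x` for an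
entry `x` of the block would make `y` the `2` of `2|13` (if `v` is in the block) or of `2|3|1`
(if `v` comes later). -/
theorem forall_lt_of_not_containsPattern {st B : List ℕ} {bs : List (List ℕ)} {v : ℕ}
    (hB : B.Pairwise (· < ·)) (hfree : ¬ ContainsPattern (st :: B :: bs))
    (hv : v ∈ (B :: bs).flatten) (hst : ∀ y ∈ st, v < y) (hdisj : ∀ x ∈ B, x ∉ st) :
    ∀ x ∈ B, ∀ y ∈ st, x < y := by
  intro x hx y hy
  by_contra hxy
  have hyx : y < x := lt_of_le_of_ne (not_lt.mp hxy) fun h => hdisj x hx (h ▸ hy)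
  have hvy := hst y hy
  refine hfree (.inl ⟨y, hy, ?_⟩)
  rcases mem_append.mp (flatten_cons ▸ hv) with hvB | hvbs
  · have hvx : [v, x] <+ B := sublist_of_subperm_of_pairwise
      (Nodup.subperm (by simp; omega) (by simp [hvB, hx])) (by simp; omega) hB
    exact .inl ⟨B, mem_cons_self, v, x, hvx, hvy, hyx⟩
  · obtain ⟨b₃, hb₃, hvb₃⟩ := mem_flatten.mp hvbs
    exact .inr ⟨B, b₃, (singleton_sublist.mpr hb₃).cons_cons B, x, hx, v, hvb₃, hvy, hyx⟩

theorem reflTransGen_sorted_of_not_containsPattern (bs : List (List ℕ)) (st : List ℕ) (k r : ℕ)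
    (hbs : ∀ b ∈ bs, b ≠ [] ∧ b.Pairwise (· < ·)) (hst : st.Pairwise (· < ·))
    (hfree : ¬ ContainsPattern (st :: bs)) (hperm : st ++ bs.flatten ~ range' (k + 1) r) :
    ReflTransGen PSStep (bs.flatten, [], st, range' 1 k) ([], [], [], range' 1 (k + r)) := by
  cases r with
  | zero =>
    obtain ⟨rfl, hflat⟩ := append_eq_nil_iff.mp (perm_nil.mp hperm)
    rw [hflat]
    exact .refl
  | succ r =>
    have hnd : (st ++ bs.flatten).Nodup := hperm.nodup_iff.mpr nodup_range'
    have hge : ∀ y ∈ st ++ bs.flatten, k + 1 ≤ y := fun y hy =>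
      (mem_range'_1.mp (hperm.subset hy)).1
    rcases mem_append.mp (hperm.symm.subset (mem_range'_1.mpr ⟨le_rfl, by omega⟩)) with hk | hk
    · obtain ⟨st', rfl⟩ :=
        exists_eq_cons_of_pairwise_lt hst hk fun y hy => hge y (mem_append_left _ hy)
      have hrun := reflTransGen_sorted_of_not_containsPattern bs st' (k + 1) r hbs hst.of_cons
        (mt (ContainsPattern.mono_head (subset_cons_self _ _)) hfree)
        (by simpa [range'_succ] using hperm)
      have hout : PSStep (bs.flatten, [], (k + 1) :: st', range' 1 k)
          (bs.flatten, [], st', range' 1 (k + 1)) := by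
        simpa [range'_one_succ] using PSStep.output bs.flatten [] st' (range' 1 k) (k + 1)
      exact .head hout (by rwa [Nat.add_right_comm] at hrun)
    · obtain ⟨B, bs', rfl⟩ : ∃ B bs', bs = B :: bs' := by
        cases bs with
        | nil => simp at hk
        | cons B bs' => exact ⟨B, bs', rfl⟩
      have hB := hbs B mem_cons_self
      have hdisj : ∀ x ∈ B, x ∉ st := fun x hx hxst =>
        disjoint_of_nodup_append hnd hxst (mem_flatten_of_mem mem_cons_self hx)
      have hlt := forall_lt_of_not_containsPattern hB.2 hfree hk
        (fun y hy => lt_of_le_of_ne (hge y (mem_append_left _ hy))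
          fun h => disjoint_of_nodup_append hnd (h ▸ hy) hk) hdisj
      have hrun := reflTransGen_sorted_of_not_containsPattern bs' (B ++ st) k (r + 1)
        (fun b hb => hbs b (mem_cons_of_mem B hb)) (pairwise_append.mpr ⟨hB.2, hst, hlt⟩)
        ((containsPattern_append_head_iff hlt).not.mpr hfree)
        (by simpa using (perm_append_comm.append_right _).trans (by simpa using hperm))
      exact (reflTransGen_psStep_block hB.1 _ _ _).trans hrun
termination_by (bs.length, st.length)

/-- The pop stack `ps` and the input `inp` split into the blocks `bs`, and the stack `st`,
read as one more block in front of them, completes them to a divided word avoiding all three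
patterns. -/
def AdmitsDivision : List ℕ × List ℕ × List ℕ × List ℕ → Prop
  | (inp, ps, st, out) => ∃ k bs, out = range' 1 k ∧ bs.flatten = ps.reverse ++ inp ∧
      (∀ b ∈ bs, b ≠ [] ∧ b.Pairwise (· < ·)) ∧ st.Pairwise (· < ·) ∧
      (∀ y ∈ st ++ bs.flatten, k < y) ∧ ¬ ContainsPattern (st :: bs)

theorem admitsDivision_of_psStep {s t : List ℕ × List ℕ × List ℕ × List ℕ} (hst : PSStep s t)
    (ht : AdmitsDivision t) : AdmitsDivision s := by
  cases hst with
  | input x inp ps st out =>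
    obtain ⟨k, bs, hout, hflat, hbs, hst, hgt, hfree⟩ := ht
    exact ⟨k, bs, hout, by simpa using hflat, hbs, hst, hgt, hfree⟩
  | transfer inp ps st out hps =>
    obtain ⟨k, bs, hout, hflat, hbs, hst, hgt, hfree⟩ := ht
    obtain ⟨hps', hst', hlt⟩ := pairwise_append.mp hst
    refine ⟨k, ps.reverse :: bs, hout, by simpa using hflat, ?_, hst', ?_,
      (containsPattern_append_head_iff hlt).not.mp hfree⟩
    · exact forall_mem_cons.mpr ⟨⟨by simpa using hps, hps'⟩, hbs⟩
    · intro y hy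
      exact hgt y (by simp only [flatten_cons, mem_append] at hy ⊢; tauto)
  | output inp ps st out x =>
    obtain ⟨k, bs, hout, hflat, hbs, hst, hgt, hfree⟩ := ht
    obtain _ | k := k
    · simp at hout
    obtain ⟨rfl, rfl⟩ := append_singleton_inj.mp (hout.trans (range'_one_succ k))
    refine ⟨k, bs, rfl, hflat, hbs, pairwise_cons.mpr ⟨fun y hy => hgt y (by simp [hy]), hst⟩,
      ?_, (containsPattern_cons_head_iff fun z hz => hgt z (by simp [hz])).not.mpr hfree⟩
    intro y hy
    rcases mem_cons.mp hy with rfl | hy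
    · omega
    · exact Nat.lt_of_succ_lt (hgt y hy)

theorem admitsDivision_of_reflTransGen {s : List ℕ × List ℕ × List ℕ × List ℕ} {n : ℕ}
    (h : ReflTransGen PSStep s ([], [], [], range' 1 n)) : AdmitsDivision s := by
  induction h using ReflTransGen.head_induction_on with
  | refl => exact ⟨n, [], rfl, rfl, by simp, .nil, by simp, by simp [ContainsPattern]⟩
  | head hstep _ ih => exact admitsDivision_of_psStep hstep ih

theorem pairwise_lt_of_not_dividedContains_21 {bs : List (List ℕ)} (hnd : bs.flatten.Nodup)
    (h : ¬ DividedContains bs [[2, 1]]) : ∀ b ∈ bs, b.Pairwise (· < ·) := by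
  intro b hb
  refine pairwise_iff_forall_sublist.mpr fun {a c} hac => ?_
  have hne : a ≠ c := by
    simpa using (hac.trans (sublist_flatten_of_mem hb)).nodup hnd
  exact lt_of_le_of_ne (not_lt.mp fun hca => h ((dividedContains_21_iff bs).mpr
    ⟨b, hb, a, c, hac, hca⟩)) hne

theorem stmt14 (p : List ℕ) (hp : IsPermList p) :
    PSSortable p ↔
      ∃ bs, IsDivision p bs ∧ ¬ DividedContains bs [[2, 1]] ∧
        ¬ DividedContains bs [[2], [1, 3]] ∧ ¬ DividedContains bs [[2], [3], [1]] := by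
  constructor
  · intro hsort
    obtain ⟨-, bs, -, hflat, hbs, -, -, hfree⟩ := admitsDivision_of_reflTransGen hsort
    refine ⟨bs, ⟨by simpa using hflat, fun b hb => (hbs b hb).1⟩, ?_,
      not_or.mp ((containsPattern_iff bs).not.mp (by simpa [ContainsPattern] using hfree))⟩
    rw [dividedContains_21_iff]
    rintro ⟨b, hb, a, c, hac, hca⟩
    exact lt_asymm (pairwise_iff_forall_sublist.mp (hbs b hb).2 hac) hca
  · rintro ⟨bs, ⟨rfl, hne⟩, h21, h213, h231⟩
    have hsorted := pairwise_lt_of_not_dividedContains_21 (hp.nodup_iff.mpr nodup_range') h21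
    have hfree : ¬ ContainsPattern ([] :: bs) := by
      simpa [ContainsPattern, containsPattern_iff] using ⟨h213, h231⟩
    simpa [PSSortable] using reflTransGen_sorted_of_not_containsPattern bs [] 0 bs.flatten.length
      (fun b hb => ⟨hne b hb, hsorted b hb⟩) .nil hfree (by simpa [IsPermList] using hp)
end

section
/- A permutation π can be sorted by the PQS machine (pop stack, then queue, then stack) if and only if dividers can be inserted into π to obtain a divided permutation avoiding the divided patterns 132, 2|13, 32|1, and 2|3|1. -/
/-- One step of the PQS machine.  State: (input, pop stack, queue, stack, output);
the pop stack and stack have their top at the head, the queue has its front at the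
head, output is appended at the end.  The pop stack can only be emptied wholesale
into the queue. -/
inductive PQSStep :
    (List ℕ × List ℕ × List ℕ × List ℕ × List ℕ) →
    (List ℕ × List ℕ × List ℕ × List ℕ × List ℕ) → Prop
  | input (x : ℕ) (inp ps q st out : List ℕ) :
      PQSStep (x :: inp, ps, q, st, out) (inp, x :: ps, q, st, out)
  | pop (inp ps q st out : List ℕ) (h : ps ≠ []) :
      PQSStep (inp, ps, q, st, out) (inp, [], q ++ ps, st, out)
  | deq (inp ps : List ℕ) (x : ℕ) (q st out : List ℕ) :
      PQSStep (inp, ps, x :: q, st, out) (inp, ps, q, x :: st, out)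
  | output (inp ps q : List ℕ) (x : ℕ) (st out : List ℕ) :
      PQSStep (inp, ps, q, x :: st, out) (inp, ps, q, st, out ++ [x])

/-- `p` can be sorted by a pop stack, followed by a queue, followed by a stack. -/
def PQSSortable (p : List ℕ) : Prop :=
  Relation.ReflTransGen PQSStep (p, [], [], [], []) ([], [], [], [], List.range' 1 p.length)

/-!
The pop stack cuts the input into consecutive blocks and hands each block, reversed, to the
queue. Moves of the machine can be reordered so that this happens first, so `p` is sortable iff
for some division `bs` of `p` the word `blockReversal bs` can be sorted by a stack fed from a
queue, that is (Knuth) iff this word avoids 231. Undoing the reversal inside the blocks, an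
occurrence of 231 spread over one, two or three blocks is exactly an occurrence of `132`,
`2|13`, `32|1` or `2|3|1` in `bs`.
-/

open List

section Blocks

variable {α : Type*}

/-- The word the pop stack hands to the queue when it is emptied after each block of `bs`. -/
def blockReversal (bs : List (List α)) : List α := (bs.map reverse).flatten

lemma blockReversal_perm_flatten (bs : List (List α)) : blockReversal bs ~ bs.flatten := by
  induction bs with
  | nil => rfl
  | cons b bs ih => exact (reverse_perm b).append ih

lemma getD_map_reverse (bs : List (List α)) (i : ℕ) :
    (bs.map reverse).getD i [] = (bs.getD i []).reverse := by
  simpa using getD_map (l := bs) (n := i) (d := []) reverse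

lemma getD_sublist_flatten (L : List (List α)) (i : ℕ) : L.getD i [] <+ L.flatten := by
  rcases lt_or_ge i L.length with hi | hi
  · rw [getD_eq_getElem _ _ hi]
    exact sublist_flatten_of_mem (getElem_mem hi)
  · rw [getD_eq_default _ _ hi]
    exact nil_sublist _

lemma flatten_ofFn_sublist_flatten {M : List (List α)} {k : ℕ} {g : Fin k → ℕ}
    (hg : StrictMono g) {ch : Fin k → List α} (h : ∀ i, ch i <+ M.getD (g i) []) :
    (ofFn ch).flatten <+ M.flatten := by
  induction k generalizing M with
  | zero => simp
  | succ k ih =>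
    rw [ofFn_succ, flatten_cons, ← take_append_drop (g 0 + 1) M, flatten_append]
    refine Sublist.append ?_ ?_
    · refine (h 0).trans ?_
      have : M.getD (g 0) [] = (M.take (g 0 + 1)).getD (g 0) [] := by
        simp [getD_eq_getElem?_getD]
      exact this ▸ getD_sublist_flatten _ _
    · refine ih (g := fun i => g i.succ - (g 0 + 1)) ?_ fun i => ?_
      · intro i j hij
        have h0i := hg (Fin.succ_pos i)
        have := hg (Fin.succ_lt_succ_iff.mpr hij)
        simp only
        omega
      · have h0i := hg (Fin.succ_pos i)
        simpa [getD_eq_getElem?_getD, getElem?_drop, Nat.add_sub_cancel' h0i] using h i.succ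

lemma exists_ofFn_of_sublist_flatten {M : List (List α)} {s : List α} (h : s <+ M.flatten) :
    ∃ k, ∃ g : Fin k → ℕ, StrictMono g ∧ ∃ ch : Fin k → List α,
      (∀ i, ch i ≠ []) ∧ (∀ i, ch i <+ M.getD (g i) []) ∧ (ofFn ch).flatten = s := by
  induction M generalizing s with
  | nil => exact ⟨0, Fin.elim0, fun i => i.elim0, Fin.elim0, fun i => i.elim0,
      fun i => i.elim0, by simpa using h⟩
  | cons B M ih =>
    obtain ⟨s₁, s₂, rfl, h₁, h₂⟩ := sublist_append_iff.mp (flatten_cons ▸ h)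
    obtain ⟨k, g, hg, ch, hne, hsub, rfl⟩ := ih h₂
    rcases eq_or_ne s₁ [] with rfl | hs₁
    · exact ⟨k, fun i => g i + 1, fun i j hij => by simpa using hg hij, ch, hne,
        fun i => by simpa using hsub i, by simp⟩
    · refine ⟨k + 1, Fin.cons 0 fun i => g i + 1, ?_, Fin.cons s₁ ch, ?_, ?_, by simp⟩
      · exact Fin.strictMono_cons.mpr
          ⟨fun _ => Nat.succ_pos _, fun i j hij => by simpa using hg hij⟩
      · exact Fin.cases hs₁ hne
      · exact Fin.cases (by simpa using h₁) fun i => by simpa using hsub i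

lemma zip_blockReversal_perm {β : Type*} {us : List (List α)} {vs : List (List β)}
    (h : us.map length = vs.map length) :
    (blockReversal us).zip (blockReversal vs) ~ us.flatten.zip vs.flatten := by
  induction us generalizing vs with
  | nil => simp [blockReversal]
  | cons u us ih =>
    obtain _ | ⟨v, vs⟩ := vs
    · simp at h
    obtain ⟨huv, h⟩ := by simpa using h
    simp only [blockReversal, map_cons, flatten_cons] at ih ⊢
    rw [zip_append (by simpa using huv), zip_append huv, zip_eq_zipWith, zip_eq_zipWith,
      ← reverse_zipWith huv]
    exact (reverse_perm _).append (ih h)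

end Blocks

lemma orderIsoList_iff_forall_mem_zip {u v : List ℕ} :
    OrderIsoList u v ↔
      u.length = v.length ∧ ∀ x ∈ u.zip v, ∀ y ∈ u.zip v, x.1 < y.1 ↔ x.2 < y.2 := by
  refine and_congr_right fun hl => ?_
  simp only [mem_iff_getElem, length_zip, getElem_zip]
  have getD_eq {w : List ℕ} {i : ℕ} (hi : i < w.length) : w.getD i 0 = w[i] :=
    getD_eq_getElem _ _ hi
  constructor
  · rintro h _ ⟨i, hi, rfl⟩ _ ⟨j, hj, rfl⟩
    have := h i j (by omega) (by omega)
    rwa [getD_eq (by omega), getD_eq (by omega), getD_eq (by omega), getD_eq (by omega)] at this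
  · intro h i j hi hj
    rw [getD_eq hi, getD_eq hj, getD_eq (hl ▸ hi), getD_eq (hl ▸ hj)]
    exact h _ ⟨i, by simpa [hl] using hi, rfl⟩ _ ⟨j, by simpa [hl] using hj, rfl⟩

lemma orderIsoList_blockReversal_iff {us vs : List (List ℕ)} (h : us.map length = vs.map length) :
    OrderIsoList (blockReversal us) (blockReversal vs) ↔ OrderIsoList us.flatten vs.flatten := by
  have hlen (ws : List (List ℕ)) : (blockReversal ws).length = ws.flatten.length := by
    simp [blockReversal, length_flatten, Function.comp_def]
  simp only [orderIsoList_iff_forall_mem_zip, hlen, (zip_blockReversal_perm h).mem_iff]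

lemma DividedContains.containsPat_blockReversal {bs qs : List (List ℕ)}
    (h : DividedContains bs qs) : ContainsPat (blockReversal bs) (blockReversal qs) := by
  obtain ⟨g, hg, ch, hsub, hlen, hiso⟩ := h
  have hlens : (ofFn ch).map length = qs.map length :=
    ext_getElem (by simp) fun i _ hi => by simpa using hlen ⟨i, by simpa using hi⟩
  refine ⟨blockReversal (ofFn ch), ?_, (orderIsoList_blockReversal_iff hlens).mpr hiso⟩
  rw [blockReversal, map_ofFn]
  refine flatten_ofFn_sublist_flatten (Fin.val_strictMono.comp hg) fun i => ?_
  simpa [getD_map_reverse, getD_eq_getElem] using (hsub i).reverse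

lemma dividedContains_of_ofFn {bs qs : List (List ℕ)} {k : ℕ} {g : Fin k → ℕ}
    (hg : StrictMono g) (hlt : ∀ i, g i < bs.length) {ch : Fin k → List ℕ}
    (hsub : ∀ i, ch i <+ bs.getD (g i) []) (hlen : (ofFn ch).map length = qs.map length)
    (hiso : OrderIsoList (ofFn ch).flatten qs.flatten) : DividedContains bs qs := by
  obtain rfl : qs.length = k := by simpa using (congrArg length hlen).symm
  refine ⟨fun i => ⟨g i, hlt i⟩, fun i j hij => hg hij, ch, fun i => ?_, fun i => ?_, hiso⟩
  · rw [get_eq_getElem, ← getD_eq_getElem _ [] (hlt i)]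
    exact hsub i
  · simpa using getElem_of_eq hlen (i := i) (by simp)

lemma exists_dividedContains_of_containsPat {bs : List (List ℕ)} {v : List ℕ}
    (h : ContainsPat (blockReversal bs) v) :
    ∃ qs : List (List ℕ), (∀ q ∈ qs, q ≠ []) ∧ blockReversal qs = v ∧ DividedContains bs qs := by
  obtain ⟨s, hs, hiso⟩ := h
  obtain ⟨k, g, hg, ch, hne, hsub, rfl⟩ := exists_ofFn_of_sublist_flatten hs
  have hsum : ((ofFn ch).map length).sum = v.length := by rw [← hiso.1, length_flatten]
  obtain ⟨ps, hps_len, rfl⟩ : ∃ ps : List (List ℕ),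
      ps.map length = (ofFn ch).map length ∧ ps.flatten = v :=
    ⟨((ofFn ch).map length).splitLengths v, map_splitLengths_length _ _ hsum.le,
      flatten_splitLengths _ _ hsum.ge⟩
  have hsub' (i : Fin k) : (ch i).reverse <+ bs.getD (g i) [] := by
    have := (hsub i).reverse
    rwa [getD_map_reverse, reverse_reverse] at this
  have hlt (i : Fin k) : g i < bs.length := by
    by_contra hi
    have := hsub' i
    rw [getD_eq_default _ _ (not_lt.mp hi), sublist_nil, reverse_eq_nil_iff] at this
    exact hne i this
  refine ⟨ps.map reverse, ?_, by simp [blockReversal],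
    dividedContains_of_ofFn hg hlt hsub' (by simpa [Function.comp_def] using hps_len.symm) ?_⟩
  · simp only [mem_map]
    rintro _ ⟨p, hp, rfl⟩
    obtain ⟨i, hi⟩ : ∃ i, (ch i).length = p.length := by
      simpa [hps_len] using mem_map_of_mem (f := length) hp
    rw [ne_eq, reverse_eq_nil_iff, ← length_eq_zero_iff, ← hi, length_eq_zero_iff]
    exact hne i
  · rw [← Function.comp_def reverse ch, ← map_ofFn]
    exact (orderIsoList_blockReversal_iff hps_len.symm).mpr hiso

lemma containsPat_231_iff {w : List ℕ} :
    ContainsPat w [2, 3, 1] ↔ ∃ a b c, c < a ∧ a < b ∧ [a, b, c] <+ w := by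
  constructor
  · rintro ⟨s, hs, hl, hiso⟩
    match s, hl with
    | [a, b, c], _ =>
      have hab := (hiso 0 1 (by simp) (by simp)).mpr (by simp)
      have hca := (hiso 2 0 (by simp) (by simp)).mpr (by simp)
      exact ⟨a, b, c, by simpa using hca, by simpa using hab, hs⟩
  · rintro ⟨a, b, c, hca, hab, hs⟩
    refine ⟨[a, b, c], hs, rfl, fun i j hi hj => ?_⟩
    simp only [length_cons, length_nil] at hi hj
    interval_cases i <;> interval_cases j <;> simp <;> omega

lemma blockReversal_eq_231_iff {qs : List (List ℕ)} (hne : ∀ q ∈ qs, q ≠ []) :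
    blockReversal qs = [2, 3, 1] ↔
      qs = [[1, 3, 2]] ∨ qs = [[2], [1, 3]] ∨ qs = [[3, 2], [1]] ∨ qs = [[2], [3], [1]] := by
  refine ⟨fun h => ?_, by rintro (rfl | rfl | rfl | rfl) <;> rfl⟩
  obtain ⟨rs, rfl⟩ : ∃ rs : List (List ℕ), qs = rs.map reverse := ⟨qs.map reverse, by simp⟩
  simp only [blockReversal, map_map, Function.comp_def, reverse_reverse, map_id'] at h
  simp only [mem_map, ne_eq, forall_exists_index, and_imp, forall_apply_eq_imp_iff₂,
    reverse_eq_nil_iff] at hne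
  rcases rs with _ | ⟨r₁, _ | ⟨r₂, _ | ⟨r₃, _ | ⟨r₄, rs⟩⟩⟩⟩
  · simp at h
  all_goals simp [append_eq_cons_iff, cons_eq_append_iff] at h hne; aesop

theorem containsPat_231_blockReversal_iff (bs : List (List ℕ)) :
    ContainsPat (blockReversal bs) [2, 3, 1] ↔
      DividedContains bs [[1, 3, 2]] ∨ DividedContains bs [[2], [1, 3]] ∨
        DividedContains bs [[3, 2], [1]] ∨ DividedContains bs [[2], [3], [1]] := by
  constructor
  · intro h
    obtain ⟨qs, hne, hqs, hc⟩ := exists_dividedContains_of_containsPat h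
    rcases (blockReversal_eq_231_iff hne).mp hqs with rfl | rfl | rfl | rfl <;> simp [hc]
  · rintro (h | h | h | h) <;> exact h.containsPat_blockReversal

lemma reach_push_block (b : List ℕ) (inp ps q st out : List ℕ) :
    Relation.ReflTransGen PQSStep (b ++ inp, ps, q, st, out)
      (inp, b.reverse ++ ps, q, st, out) := by
  induction b generalizing ps with
  | nil => rfl
  | cons x b ih =>
    refine .head (.input x (b ++ inp) ps q st out) ?_
    simpa using ih (x :: ps)

lemma reach_of_division {bs : List (List ℕ)} (hne : ∀ b ∈ bs, b ≠ []) (q st out : List ℕ) :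
    Relation.ReflTransGen PQSStep (bs.flatten, [], q, st, out)
      ([], [], q ++ blockReversal bs, st, out) := by
  induction bs generalizing q with
  | nil => simpa [blockReversal] using .refl
  | cons b bs ih =>
    have hb : b.reverse ++ [] ≠ [] := by simpa using hne b mem_cons_self
    refine (reach_push_block b _ [] q st out).tail (.pop _ _ q st out hb) |>.trans ?_
    simpa [blockReversal] using ih (fun c hc => hne c (mem_cons_of_mem b hc)) (q ++ b.reverse)

/-- A run of the machine can be reordered so that the pop stack first cuts the remaining input
into blocks and empties them, block by block, into the queue. -/
lemma exists_division_of_reach {fin : List ℕ}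
    {s : List ℕ × List ℕ × List ℕ × List ℕ × List ℕ}
    (h : Relation.ReflTransGen PQSStep s ([], [], [], [], fin)) :
    ∃ bs : List (List ℕ), (∀ b ∈ bs, b ≠ []) ∧ s.2.1.reverse ++ s.1 = bs.flatten ∧
      Relation.ReflTransGen PQSStep ([], [], s.2.2.1 ++ blockReversal bs, s.2.2.2.1, s.2.2.2.2)
        ([], [], [], [], fin) := by
  induction h using Relation.ReflTransGen.head_induction_on with
  | refl => exact ⟨[], by simp, rfl, by simpa [blockReversal] using .refl⟩
  | head step _ ih =>
    obtain ⟨bs, hne, hflat, hreach⟩ := ih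
    cases step with
    | input x inp ps q st out => exact ⟨bs, hne, by simpa using hflat, hreach⟩
    | pop inp ps q st out hps =>
      refine ⟨ps.reverse :: bs, ?_, by simpa using hflat, by simpa [blockReversal] using hreach⟩
      simpa using ⟨hps, hne⟩
    | deq inp ps x q st out => exact ⟨bs, hne, hflat, .head (.deq [] [] x _ st out) hreach⟩
    | output inp ps q x st out => exact ⟨bs, hne, hflat, .head (.output [] [] _ x st out) hreach⟩

theorem pqsSortable_iff_exists_division (p : List ℕ) :
    PQSSortable p ↔ ∃ bs, IsDivision p bs ∧
      Relation.ReflTransGen PQSStep ([], [], blockReversal bs, [], [])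
        ([], [], [], [], range' 1 p.length) := by
  constructor
  · intro h
    obtain ⟨bs, hne, hflat, hreach⟩ := exists_division_of_reach h
    exact ⟨bs, ⟨by simpa using hflat.symm, hne⟩, hreach⟩
  · rintro ⟨bs, ⟨rfl, hne⟩, hreach⟩
    exact (reach_of_division hne [] [] []).trans hreach

lemma ContainsPat.mono {p p' q : List ℕ} (hp : p <+ p') (h : ContainsPat p q) : ContainsPat p' q :=
  let ⟨s, hs, hiso⟩ := h; ⟨s, hs.trans hp, hiso⟩

lemma not_containsPat_231_insert_min {l₁ l₂ : List ℕ} {x : ℕ} (h₁ : l₁.Pairwise (· > ·))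
    (hx : ∀ y ∈ l₁ ++ l₂, x < y) (h : ¬ContainsPat (l₁ ++ l₂) [2, 3, 1]) :
    ¬ContainsPat (l₁ ++ x :: l₂) [2, 3, 1] := by
  rw [containsPat_231_iff] at h ⊢
  rintro ⟨a, b, c, hca, hab, hs⟩
  obtain ⟨r₁, r₂, heq, hr₁, hr₂⟩ := sublist_append_iff.mp hs
  obtain hr₂ | ⟨r, rfl, hr⟩ := sublist_cons_iff.mp hr₂
  · exact h ⟨a, b, c, hca, hab, heq ▸ hr₁.append hr₂⟩
  rcases r₁ with _ | ⟨a', _ | ⟨b', _ | ⟨c', r₁⟩⟩⟩ <;> simp only [nil_append, cons_append,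
    cons.injEq] at heq
  · obtain ⟨rfl, rfl⟩ := heq
    have := hx c (mem_append_right _ (hr.subset (by simp)))
    omega
  · obtain ⟨rfl, rfl, rfl⟩ := heq
    have := hx a (mem_append_left _ (hr₁.subset (by simp)))
    omega
  · obtain ⟨rfl, rfl, rfl, -⟩ := heq
    have := rel_of_pairwise_cons (h₁.sublist hr₁) (mem_singleton_self b)
    omega
  · simp at heq

/-- Queue `q` and stack `st` (top first) once `1, …, t` have been output and `m` entries remain.
The pattern condition is on the stack read bottom to top followed by the queue, a word that a
dequeue leaves unchanged. -/
def StackInv (t m : ℕ) (q st : List ℕ) : Prop :=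
  (q ++ st) ~ range' (t + 1) m ∧ st.Pairwise (· < ·) ∧ ¬ContainsPat (st.reverse ++ q) [2, 3, 1]

namespace StackInv

variable {t m x : ℕ} {q st : List ℕ}

lemma nodup (h : StackInv t m q st) : (q ++ st).Nodup := h.1.nodup_iff.mpr nodup_range'

lemma lt_of_mem (h : StackInv t m q st) {y : ℕ} (hy : y ∈ q ++ st) : t < y := by
  obtain ⟨i, -, rfl⟩ := mem_range'.mp (h.1.mem_iff.mp hy)
  omega

lemma eq_cons_of_mem (h : StackInv t m q st) (hst : t + 1 ∈ st) : ∃ st', st = (t + 1) :: st' := by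
  obtain _ | ⟨s, st'⟩ := st
  · simp at hst
  obtain rfl | hst' := mem_cons.mp hst
  · exact ⟨st', rfl⟩
  · have := rel_of_pairwise_cons h.2.1 hst'
    have := h.lt_of_mem (mem_append_right q mem_cons_self)
    omega

lemma of_deq (h : StackInv t m q (x :: st)) : StackInv t m (x :: q) st :=
  ⟨perm_middle.symm.trans h.1, h.2.1.of_cons, by simpa using h.2.2⟩

lemma deq (h : StackInv t m (x :: q) st) (ht : t + 1 ∈ x :: q) : StackInv t m q (x :: st) := by
  refine ⟨perm_middle.trans h.1, .cons (fun y hy => ?_) h.2.1, by simpa using h.2.2⟩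
  have hdisj := disjoint_of_nodup_append h.nodup
  have hyx : x ≠ y := fun hxy => hdisj mem_cons_self (hxy ▸ hy)
  have hty : t + 1 ≠ y := fun hty => hdisj ht (hty ▸ hy)
  have := h.lt_of_mem (mem_append_right _ hy)
  by_contra hxy
  have htq : t + 1 ∈ q := (mem_cons.mp ht).resolve_left (by omega)
  refine h.2.2 (containsPat_231_iff.mpr ⟨y, x, t + 1, by omega, by omega, ?_⟩)
  exact (singleton_sublist.mpr (mem_reverse.mpr hy)).append
    ((singleton_sublist.mpr htq).cons_cons x)

lemma of_output (h : StackInv (t + 1) m q st) : StackInv t (m + 1) q ((t + 1) :: st) := by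
  refine ⟨perm_middle.trans ((h.1.cons _).trans (by rw [range'_succ])),
    .cons (fun y hy => h.lt_of_mem (mem_append_right q hy)) h.2.1, ?_⟩
  simpa using not_containsPat_231_insert_min (pairwise_reverse.mpr h.2.1)
    (fun y hy => h.lt_of_mem (by simpa [or_comm] using hy)) h.2.2

lemma output (h : StackInv t (m + 1) q ((t + 1) :: st)) : StackInv (t + 1) m q st := by
  have hperm : (t + 1) :: (q ++ st) ~ (t + 1) :: range' (t + 1 + 1) m := by
    rw [← range'_succ]
    exact perm_middle.symm.trans h.1
  refine ⟨(perm_cons _).mp hperm, h.2.1.of_cons, fun hc => h.2.2 (hc.mono ?_)⟩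
  simp

end StackInv

theorem reach_of_stackInv {t m : ℕ} {q st : List ℕ} (h : StackInv t m q st) :
    Relation.ReflTransGen PQSStep ([], [], q, st, range' 1 t)
      ([], [], [], [], range' 1 (t + m)) := by
  obtain _ | m := m
  · obtain ⟨rfl, rfl⟩ : q = [] ∧ st = [] := by simpa using h.1
    rfl
  by_cases hst : t + 1 ∈ st
  · obtain ⟨st, rfl⟩ := h.eq_cons_of_mem hst
    refine .head (.output [] [] q (t + 1) st _) ?_
    rw [show range' 1 t ++ [t + 1] = range' 1 (t + 1) by simp [range'_concat, Nat.add_comm],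
      show t + (m + 1) = t + 1 + m by omega]
    exact reach_of_stackInv h.output
  · have hq : t + 1 ∈ q := by
      simpa [hst] using h.1.mem_iff.mpr (mem_range'.mpr ⟨0, by omega, rfl⟩)
    obtain ⟨x, q, rfl⟩ := exists_cons_of_ne_nil (ne_nil_of_mem hq)
    exact .head (.deq [] [] x q st _) (reach_of_stackInv (h.deq hq))
termination_by 2 * q.length + st.length

theorem stackInv_of_reach {n : ℕ} {s : List ℕ × List ℕ × List ℕ × List ℕ × List ℕ}
    (h : Relation.ReflTransGen PQSStep s ([], [], [], [], range' 1 n)) (hinp : s.1 = [])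
    (hps : s.2.1 = []) :
    ∃ t m, t + m = n ∧ s.2.2.2.2 = range' 1 t ∧ StackInv t m s.2.2.1 s.2.2.2.1 := by
  induction h using Relation.ReflTransGen.head_induction_on with
  | refl => exact ⟨n, 0, rfl, rfl, by simp [StackInv, containsPat_231_iff]⟩
  | head step _ ih =>
    cases step with
    | input x inp ps q st out => simp at hinp
    | pop inp ps q st out hne => exact absurd hps hne
    | deq inp ps x q st out =>
      obtain ⟨t, m, hn, hout, hinv⟩ := ih hinp hps
      exact ⟨t, m, hn, hout, hinv.of_deq⟩
    | output inp ps q x st out =>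
      obtain ⟨_ | t, m, hn, hout, hinv⟩ := ih hinp hps
      · simp at hout
      rw [range'_concat] at hout
      obtain ⟨rfl, hx⟩ := append_inj' hout rfl
      obtain rfl : x = t + 1 := by simpa [Nat.add_comm] using hx
      exact ⟨t, m + 1, by omega, rfl, hinv.of_output⟩

theorem reach_sorted_iff {w : List ℕ} {n : ℕ} (hw : w ~ range' 1 n) :
    Relation.ReflTransGen PQSStep ([], [], w, [], []) ([], [], [], [], range' 1 n) ↔
      ¬ContainsPat w [2, 3, 1] := by
  constructor
  · intro h
    obtain ⟨t, m, -, hout, hinv⟩ := stackInv_of_reach h rfl rfl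
    obtain rfl : t = 0 := by simpa using hout.symm
    simpa using hinv.2.2
  · intro h
    simpa using reach_of_stackInv (t := 0) ⟨by simpa using hw, .nil, by simpa using h⟩

theorem stmt15 (p : List ℕ) (hp : IsPermList p) :
    PQSSortable p ↔
      ∃ bs, IsDivision p bs ∧ ¬ DividedContains bs [[1, 3, 2]] ∧
        ¬ DividedContains bs [[2], [1, 3]] ∧ ¬ DividedContains bs [[3, 2], [1]] ∧
        ¬ DividedContains bs [[2], [3], [1]] := by
  rw [pqsSortable_iff_exists_division]
  refine exists_congr fun bs => and_congr_right fun hbs => ?_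
  have hperm : blockReversal bs ~ range' 1 p.length :=
    (blockReversal_perm_flatten bs).trans (hbs.1 ▸ hp)
  rw [reach_sorted_iff hperm, containsPat_231_blockReversal_iff]
  simp only [not_or]
end

section
/- The set U = {u_k : k ≥ 1}, where u_k = 2,3,5,1,7,4,9,6,11,8,...,2k+3,2k,2k+4,2k+5,2k+2 (of length 2k+5), is an infinite antichain in the permutation containment order: no u_j is contained as a pattern in u_k for j ≠ k. -/
/-- The antichain element `u_k = 2, 3, 5, 1, 7, 4, 9, 6, …, 2k+3, 2k, 2k+4, 2k+5, 2k+2`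
(of length `2k + 5`, for `k ≥ 1`). -/
def uPerm (k : ℕ) : List ℕ :=
  [2, 3, 5, 1] ++ ((List.range' 2 (k - 1)).flatMap fun i => [2 * i + 3, 2 * i]) ++
    [2 * k + 4, 2 * k + 5, 2 * k + 2]

/-- The entry of `uPerm k` at the 0-indexed position `p` (see `uPerm_getD`). -/
def uval (k p : ℕ) : ℕ :=
  if p = 0 then 2 else if p = 1 then 3 else if p = 3 then 1
  else if p = 2*k+2 then 2*k+4 else if p = 2*k+3 then 2*k+5
  else if p = 2*k+4 then 2*k+2
  else if p % 2 = 0 then p + 3 else p - 1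

lemma flatMap_range'_pairs (s n : ℕ) :
    (List.range' s n).flatMap (fun i => [2*i+3, 2*i]) =
      (List.range' (2*s) (2*n)).map (fun t => if t % 2 = 0 then t + 3 else t - 1) := by
  induction n with
  | zero => simp
  | succ n ih =>
    rw [List.range'_concat, List.flatMap_append, ih, show 2 * (n + 1) = 2 * n + 2 by ring,
      ← List.range'_append, List.map_append, List.append_cancel_left_eq]
    simp only [List.range'_succ, List.range'_zero, List.flatMap_cons, List.flatMap_nil,
      List.map_cons, List.map_nil, List.append_nil, List.cons.injEq, and_true]
    constructor <;> split_ifs <;> omega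

lemma uPerm_eq_map {k : ℕ} (hk : 1 ≤ k) :
    uPerm k = (List.range (2*k+5)).map (uval k) := by
  obtain ⟨m, rfl⟩ := Nat.exists_eq_add_of_le' hk
  have hhead : [2, 3, 5, 1] = (List.range' 0 4).map (uval (m+1)) := by
    simp [List.range'_succ, uval]
  have hbody : (List.range' 4 (2*m)).map (fun t => if t % 2 = 0 then t + 3 else t - 1) =
      (List.range' 4 (2*m)).map (uval (m+1)) := by
    refine List.map_congr_left fun t ht => ?_
    rw [List.mem_range'_1] at ht
    unfold uval
    split_ifs <;> omega
  have htail : [2*(m+1)+4, 2*(m+1)+5, 2*(m+1)+2] =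
      (List.range' (4 + 2*m) 3).map (uval (m+1)) := by
    simp only [List.range'_succ, List.range'_zero, List.map_cons, List.map_nil, List.cons.injEq,
      and_true]
    refine ⟨?_, ?_, ?_⟩ <;> grind [uval]
  rw [List.range_eq_range', show 2*(m+1)+5 = 4 + 2*m + 3 by ring, ← List.range'_append_1,
    ← List.range'_append_1, List.map_append, List.map_append, zero_add (4 + 2*m), ← hhead,
    ← hbody, ← htail, uPerm, flatMap_range'_pairs]
  rfl

theorem ContainsPat.exists_strictMono {p q : List ℕ} (h : ContainsPat p q) :
    ∃ f : ℕ → ℕ, StrictMono f ∧ (∀ a < q.length, f a < p.length) ∧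
      ∀ a < q.length, ∀ b < q.length,
        (p.getD (f a) 0 < p.getD (f b) 0 ↔ q.getD a 0 < q.getD b 0) := by
  obtain ⟨s, hsub, hlen, hiso⟩ := h
  obtain ⟨f, hf⟩ := List.sublist_iff_exists_orderEmbedding_getElem?_eq.mp hsub
  have hgetD : ∀ a, p.getD (f a) 0 = s.getD a 0 := fun a => by
    simp only [List.getD_eq_getElem?_getD, hf]
  refine ⟨f, f.strictMono, fun a ha => ?_, fun a ha b hb => ?_⟩
  · have : s[a]?.isSome := by simp only [isSome_getElem?]; omega
    rwa [hf, isSome_getElem?] at this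
  · rw [hgetD, hgetD]
    exact hiso a b (by omega) (by omega)

lemma uPerm_length {k : ℕ} (hk : 1 ≤ k) : (uPerm k).length = 2*k+5 := by
  simp [uPerm_eq_map hk]

lemma uPerm_getD {k p : ℕ} (hk : 1 ≤ k) (hp : p < 2*k+5) : (uPerm k).getD p 0 = uval k p := by
  simp [uPerm_eq_map hk, List.getD_eq_getElem?_getD, hp]

lemma uval_two_mul {k i : ℕ} (hi : 1 ≤ i) (hik : i ≤ k) : uval k (2*i) = 2*i+3 := by
  grind [uval]

lemma uval_two_mul_add_one {k i : ℕ} (hi : 2 ≤ i) (hik : i ≤ k) : uval k (2*i+1) = 2*i := by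
  grind [uval]

lemma uval_last (k : ℕ) : uval k (2*k+4) = 2*k+2 := by
  grind [uval]

lemma eq_add_one_or_eq_add_three_of_uval_lt {k q x : ℕ} (hqx : q < x) (hx : x < 2*k+5)
    (h3 : x ≠ 3) (hlast : x ≠ 2*k+4) (hinv : uval k x < uval k q) :
    x = q + 1 ∨ x = q + 3 := by
  unfold uval at hinv
  split_ifs at hinv <;> omega

lemma eq_three_or_eq_last_of_uval_lt {k q₁ q₂ q₃ x : ℕ} (h₁₂ : q₁ < q₂) (h₂₃ : q₂ < q₃)
    (h₃ : q₃ < x) (hx : x < 2*k+5) (hinv₁ : uval k x < uval k q₁)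
    (hinv₂ : uval k x < uval k q₂) (hinv₃ : uval k x < uval k q₃) : x = 3 ∨ x = 2*k+4 := by
  by_contra! h
  have := eq_add_one_or_eq_add_three_of_uval_lt (by omega) hx h.1 h.2 hinv₁
  have := eq_add_one_or_eq_add_three_of_uval_lt (by omega) hx h.1 h.2 hinv₂
  have := eq_add_one_or_eq_add_three_of_uval_lt h₃ hx h.1 h.2 hinv₃
  omega

lemma eq_of_uval_lt {k i y : ℕ} (hik : i < k) (hy : 2*i+2 ≤ y)
    (hv : uval k y < 2*i+3) : y = 2*i+3 := by
  unfold uval at hv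
  split_ifs at hv <;> omega

lemma StrictMono.apply_eq_self_of_le {f : ℕ → ℕ} (hf : StrictMono f) {n a : ℕ} (hn : f n = n)
    (ha : a ≤ n) : f a = a := by
  have := hf.add_le_nat (n - a) a
  rw [Nat.sub_add_cancel ha, hn] at this
  have := hf.le_apply (x := a)
  omega

structure IsUEmbedding (j k : ℕ) (f : ℕ → ℕ) : Prop where
  strictMono : StrictMono f
  lt : ∀ a < 2*j+5, f a < 2*k+5
  uval_lt_iff : ∀ a < 2*j+5, ∀ b < 2*j+5, (uval k (f a) < uval k (f b) ↔ uval j a < uval j b)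

lemma ContainsPat.exists_isUEmbedding {j k : ℕ} (hj : 1 ≤ j) (hk : 1 ≤ k)
    (h : ContainsPat (uPerm k) (uPerm j)) : ∃ f, IsUEmbedding j k f := by
  obtain ⟨f, hf, hlt, hcmp⟩ := h.exists_strictMono
  simp only [uPerm_length hj, uPerm_length hk] at hlt hcmp
  refine ⟨f, hf, hlt, fun a ha b hb => ?_⟩
  rw [← uPerm_getD hk (hlt a ha), ← uPerm_getD hk (hlt b hb), ← uPerm_getD hj ha,
    ← uPerm_getD hj hb]
  exact hcmp a ha b hb

namespace IsUEmbedding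

variable {j k : ℕ} {f : ℕ → ℕ}

lemma le (h : IsUEmbedding j k f) : j ≤ k := by
  have := h.strictMono.le_apply (x := 2*j+4)
  have := h.lt (2*j+4) (by omega)
  omega

lemma apply_three (h : IsUEmbedding j k f) (hj : 1 ≤ j) : f 3 = 3 := by
  have hinv : ∀ q < 3, uval k (f 3) < uval k (f q) := fun q hq =>
    (h.uval_lt_iff 3 (by omega) q (by omega)).2 (by interval_cases q <;> grind [uval])
  have hspread := h.strictMono.add_le_nat (2*j+1) 3
  have := h.lt (2*j+1+3) (by omega)
  have := eq_three_or_eq_last_of_uval_lt (h.strictMono (by omega : 0 < 1))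
    (h.strictMono (by omega : 1 < 2)) (h.strictMono (by omega : 2 < 3)) (h.lt 3 (by omega))
    (hinv 0 (by omega)) (hinv 1 (by omega)) (hinv 2 (by omega))
  omega

lemma apply_eq_of_uval_lt (h : IsUEmbedding j k f) {i p : ℕ} (hi : 1 ≤ i) (hij : i ≤ j)
    (hik : i < k) (hfix : f (2*i+1) = 2*i+1) (hp : 2*i+1 < p) (hpj : p < 2*j+5)
    (hv : uval j p < 2*i+3) : f p = 2*i+3 := by
  have hfi : f (2*i) = 2*i := h.strictMono.apply_eq_self_of_le hfix (by omega)
  have hlt : uval k (f p) < uval k (f (2*i)) := by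
    rw [h.uval_lt_iff p hpj (2*i) (by omega), uval_two_mul hi hij]
    exact hv
  rw [hfi, uval_two_mul hi hik.le] at hlt
  exact eq_of_uval_lt hik ((h.strictMono.le_apply).trans' (by omega)) hlt

lemma apply_two_mul_add_one (h : IsUEmbedding j k f) (hjk : j < k) {i : ℕ} (hi : 1 ≤ i)
    (hij : i ≤ j) : f (2*i+1) = 2*i+1 := by
  induction i, hi using Nat.le_induction with
  | base => exact h.apply_three (by omega)
  | succ i hi ih =>
    refine h.apply_eq_of_uval_lt hi (by omega) (by omega) (ih (by omega)) (by omega) (by omega) ?_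
    rw [uval_two_mul_add_one (by omega) hij]
    omega

lemma false_of_lt (h : IsUEmbedding j k f) (hj : 1 ≤ j) (hjk : j < k) : False := by
  have hfix := h.apply_two_mul_add_one hjk hj le_rfl
  have := h.apply_eq_of_uval_lt (p := 2*j+4) hj le_rfl hjk hfix (by omega) (by omega)
    (by rw [uval_last]; omega)
  have := h.strictMono.le_apply (x := 2*j+4)
  omega

end IsUEmbedding

theorem stmt17 :
    Set.Infinite {p : List ℕ | ∃ k, 1 ≤ k ∧ p = uPerm k} ∧
      ∀ j k, 1 ≤ j → 1 ≤ k → j ≠ k → ¬ ContainsPat (uPerm k) (uPerm j) := by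
  refine ⟨?_, fun j k hj hk hne hcon => ?_⟩
  · refine Set.infinite_of_injective_forall_mem (f := fun t : ℕ => uPerm (t+1)) ?_
      fun t => ⟨t+1, by omega, rfl⟩
    intro a b hab
    have := congrArg List.length hab
    simp only [uPerm_length (Nat.le_add_left 1 _)] at this
    omega
  · obtain ⟨f, hf⟩ := hcon.exists_isUEmbedding hj hk
    exact hf.false_of_lt hj (lt_of_le_of_ne hf.le hne)
end

section
/- Each u_k = 2,3,5,1,7,4,...,2k+3,2k,2k+4,2k+5,2k+2 contains exactly two occurrences of the pattern 2341: one formed by its first four entries 2,3,5,1, and one formed by the first, second, third, and fifth entries from the right end. -/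
/-!
Outside its first four and last three positions, `u_k` has entry `p + 3` at each even and `p - 1`
at each odd (0-based) position `p`, and everywhere the entry at `p` lies between `p - 2` and
`p + 3`. An occurrence `i₁ < i₂ < i₃ < i₄` of 2341 has its last entry below its first, which forces
`i₄ ≤ i₁ + 4`; no window of five consecutive positions inside the regular part contains the
pattern, so an occurrence lives at one of the two ends, where a direct check leaves one each.
-/

theorem List.length_flatMap_pair {α β : Type*} (l : List α) (f g : α → β) :
    (l.flatMap fun a => [f a, g a]).length = 2 * l.length := by
  induction l with
  | nil => rfl
  | cons a l ih => simp only [List.flatMap_cons, List.length_append, ih]; simp; ring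

theorem List.getD_flatMap_pair {α β : Type*} (l : List α) (f g : α → β) (d : β) {m : ℕ}
    (hm : m < 2 * l.length) :
    (l.flatMap fun a => [f a, g a]).getD m d =
      if m % 2 = 0 then f l[m / 2] else g l[m / 2] := by
  induction l generalizing m with
  | nil => simp at hm
  | cons a l ih =>
    match m with
    | 0 => simp
    | 1 => simp
    | m + 2 =>
      simp only [List.flatMap_cons, List.cons_append, List.nil_append, List.getD_cons_succ]
      rw [ih (by simp at hm; omega)]
      simp [Nat.add_mod_right, show (m + 2) / 2 = m / 2 + 1 by omega]

theorem length_uPerm {k : ℕ} (hk : 1 ≤ k) : (uPerm k).length = 2 * k + 5 := by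
  simp only [uPerm, List.length_append, List.length_flatMap_pair, List.length_range']
  simp; omega

theorem getD_uPerm_of_lt_four (k : ℕ) {p : ℕ} (hp : p < 4) :
    (uPerm k).getD p 0 = [2, 3, 5, 1].getD p 0 := by
  rw [uPerm, List.append_assoc, List.getD_append _ _ _ _ (by simpa using hp)]

theorem getD_uPerm_of_le_of_lt (k : ℕ) {p : ℕ} (h4 : 4 ≤ p) (hp : p < 2 * k + 2) :
    (uPerm k).getD p 0 = if p % 2 = 0 then p + 3 else p - 1 := by
  have hmid : p - 4 < 2 * (List.range' 2 (k - 1)).length := by simp; omega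
  rw [uPerm, List.getD_append _ _ _ _ (by simp; omega),
    List.getD_append_right _ _ _ _ (by simpa using h4),
    show ([2, 3, 5, 1] : List ℕ).length = 4 from rfl, List.getD_flatMap_pair _ _ _ _ hmid,
    List.getElem_range']
  split_ifs <;> omega

theorem getD_uPerm_of_le {k : ℕ} (hk : 1 ≤ k) {p : ℕ} (hp : 2 * k + 2 ≤ p) :
    (uPerm k).getD p 0 = [2 * k + 4, 2 * k + 5, 2 * k + 2].getD (p - (2 * k + 2)) 0 := by
  rw [uPerm, List.getD_append_right _ _ _ _ (by simp; omega)]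
  simp only [List.length_append, List.length_flatMap_pair, List.length_range', List.length_cons,
    List.length_nil]
  congr 2; omega

theorem getD_uPerm_cases {k : ℕ} (hk : 1 ≤ k) {p : ℕ} (hp : p < 2 * k + 5) :
    (p = 0 ∧ (uPerm k).getD p 0 = 2) ∨ (p = 1 ∧ (uPerm k).getD p 0 = 3) ∨
    (p = 2 ∧ (uPerm k).getD p 0 = 5) ∨ (p = 3 ∧ (uPerm k).getD p 0 = 1) ∨
    (4 ≤ p ∧ p < 2 * k + 2 ∧ p % 2 = 0 ∧ (uPerm k).getD p 0 = p + 3) ∨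
    (4 ≤ p ∧ p < 2 * k + 2 ∧ p % 2 = 1 ∧ (uPerm k).getD p 0 = p - 1) ∨
    (p = 2 * k + 2 ∧ (uPerm k).getD p 0 = 2 * k + 4) ∨
    (p = 2 * k + 3 ∧ (uPerm k).getD p 0 = 2 * k + 5) ∨
    (p = 2 * k + 4 ∧ (uPerm k).getD p 0 = 2 * k + 2) := by
  rcases lt_or_ge p 4 with hp4 | hp4
  · rw [getD_uPerm_of_lt_four k hp4]
    interval_cases p <;> simp
  rcases lt_or_ge p (2 * k + 2) with hpk | hpk
  · rw [getD_uPerm_of_le_of_lt k hp4 hpk]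
    split_ifs <;> omega
  · rw [getD_uPerm_of_le hk hpk]
    obtain ⟨j, rfl⟩ : ∃ j, p = 2 * k + 2 + j := ⟨p - (2 * k + 2), by omega⟩
    have hj : j < 3 := by omega
    rw [Nat.add_sub_cancel_left]
    interval_cases j <;> simp

theorem stmt18 (k : ℕ) (hk : 1 ≤ k) (i1 i2 i3 i4 : ℕ)
    (h12 : i1 < i2) (h23 : i2 < i3) (h34 : i3 < i4) (h4 : i4 < (uPerm k).length) :
    ((uPerm k).getD i4 0 < (uPerm k).getD i1 0 ∧
        (uPerm k).getD i1 0 < (uPerm k).getD i2 0 ∧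
        (uPerm k).getD i2 0 < (uPerm k).getD i3 0) ↔
      ((i1, i2, i3, i4) = (0, 1, 2, 3) ∨
        (i1, i2, i3, i4) = ((uPerm k).length - 5, (uPerm k).length - 3,
          (uPerm k).length - 2, (uPerm k).length - 1)) := by
  rw [length_uPerm hk] at h4 ⊢
  have u1 := getD_uPerm_cases hk (p := i1) (by omega)
  have u2 := getD_uPerm_cases hk (p := i2) (by omega)
  have u3 := getD_uPerm_cases hk (p := i3) (by omega)
  have u4 := getD_uPerm_cases hk h4
  simp only [Prod.mk.injEq]
  omega
end
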